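/- arXiv:2006.06832 — 3 statements merged into one kernel-verified Lean document; each statement's English description precedes it below -/
import Mathlib

section
/- Let S ⊆ [m] × [n] with G_S doubly chordal bipartite, and fix a column j₀ with nonzero rows {1,…,r}. For each block B_α with rows(B_α) ≠ ∅, the induced clique D_α = {(i,j) ∈ S : i ∈ rows(B_α) and rows(B_α) ⊆ rows(j)} is a maximal clique of S. Moreover, every maximal clique of S that contains some element (i, j₀) is equal to D_α for some block B_α. -/
open Finset

open scoped Classical

/-- The bipartite graph associated to `S ⊆ [m] × [n]`. -/
def qiGraph (m n : ℕ) (S : Finset (Fin m × Fin n)) : SimpleGraph (Fin m ⊕ Fin n) :=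
  SimpleGraph.fromRel (fun a b =>
    ∃ p : Fin m × Fin n, p ∈ S ∧ a = Sum.inl p.1 ∧ b = Sum.inr p.2)

/-- A chord of a closed walk: an edge of `G` between vertices of the walk that is not
an edge of the walk. -/
def IsChord {V : Type*} (G : SimpleGraph V) {v : V} (c : G.Walk v v) (e : Sym2 V) : Prop :=
  e ∈ G.edgeSet ∧ e ∉ c.edges ∧ ∀ x ∈ e, x ∈ c.support

/-- Every cycle of length at least 6 has at least one chord. -/
def ChordalBipartite {V : Type*} (G : SimpleGraph V) : Prop :=
  ∀ (v : V) (c : G.Walk v v), c.IsCycle → 6 ≤ c.length → ∃ e : Sym2 V, IsChord G c e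

/-- Every cycle of length at least 6 has at least two chords. -/
def DoublyChordalBipartite {V : Type*} (G : SimpleGraph V) : Prop :=
  ∀ (v : V) (c : G.Walk v v), c.IsCycle → 6 ≤ c.length →
    ∃ e₁ e₂ : Sym2 V, e₁ ≠ e₂ ∧ IsChord G c e₁ ∧ IsChord G c e₂

variable {m n : ℕ}

/-- A (nonempty) clique in `S`: a subset of `S` of the form `R × T`. -/
def IsGridClique (S C : Finset (Fin m × Fin n)) : Prop :=
  C.Nonempty ∧ C ⊆ S ∧ ∀ p ∈ C, ∀ q ∈ C, (p.1, q.2) ∈ C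

/-- A maximal clique in `S`. -/
def IsMaxClique (S C : Finset (Fin m × Fin n)) : Prop :=
  IsGridClique S C ∧ ∀ C', IsGridClique S C' → C ⊆ C' → C = C'

/-- `Max(S)`: the set of maximal cliques of `S`. -/
noncomputable def maxCliques (S : Finset (Fin m × Fin n)) : Finset (Finset (Fin m × Fin n)) :=
  S.powerset.filter (IsMaxClique S)

/-- `Max(x)`: maximal cliques containing the index `x`. -/
noncomputable def maxCliquesAt (S : Finset (Fin m × Fin n)) (x : Fin m × Fin n) :
    Finset (Finset (Fin m × Fin n)) :=
  (maxCliques S).filter (fun D => x ∈ D)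

/-- Pairwise intersections of distinct maximal cliques of `S`. -/
noncomputable def pairInts (S : Finset (Fin m × Fin n)) : Finset (Finset (Fin m × Fin n)) :=
  ((maxCliques S ×ˢ maxCliques S).filter (fun P => P.1 ≠ P.2)).image (fun P => P.1 ∩ P.2)

/-- `Int(S)`: containment-maximal pairwise intersections of maximal cliques of `S`. -/
noncomputable def maxInts (S : Finset (Fin m × Fin n)) : Finset (Finset (Fin m × Fin n)) :=
  (pairInts S).filter (fun C => ∀ C' ∈ pairInts S, C ⊆ C' → C = C')

/-- Pairwise intersections of distinct elements of `Max(x)`. -/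
noncomputable def pairIntsAt (S : Finset (Fin m × Fin n)) (x : Fin m × Fin n) :
    Finset (Finset (Fin m × Fin n)) :=
  ((maxCliquesAt S x ×ˢ maxCliquesAt S x).filter (fun P => P.1 ≠ P.2)).image
    (fun P => P.1 ∩ P.2)

/-- `Int(x)`: containment-maximal pairwise intersections of elements of `Max(x)`. -/
noncomputable def maxIntsAt (S : Finset (Fin m × Fin n)) (x : Fin m × Fin n) :
    Finset (Finset (Fin m × Fin n)) :=
  (pairIntsAt S x).filter (fun C => ∀ C' ∈ pairIntsAt S x, C ⊆ C' → C = C')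

/-- The rows of column `j` that are also nonzero rows of column `j₀`. -/
noncomputable def colRows (S : Finset (Fin m × Fin n)) (j₀ j : Fin n) : Finset (Fin m) :=
  Finset.univ.filter (fun i => (i, j) ∈ S ∧ (i, j₀) ∈ S)

/-- The clique induced by the block (w.r.t. column `j₀`) of the column `j`. -/
noncomputable def inducedClique (S : Finset (Fin m × Fin n)) (j₀ j : Fin n) :
    Finset (Fin m × Fin n) :=
  Finset.univ.filter (fun p => p.1 ∈ colRows S j₀ j ∧ colRows S j₀ j ⊆ colRows S j₀ p.2)

/-- The row indices of a subset of `S`. -/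
noncomputable def rowsOf (D : Finset (Fin m × Fin n)) : Finset (Fin m) := D.image Prod.fst

/-- An element of the poset `P(j₀)`: a maximal clique of `S` meeting column `j₀`. -/
def PNode (S : Finset (Fin m × Fin n)) (j₀ : Fin n) (D : Finset (Fin m × Fin n)) : Prop :=
  IsMaxClique S D ∧ ∃ i, (i, j₀) ∈ D

/-- `PCovers S j₀ Dβ Dα` means `Dα ⋖ Dβ` in the poset `P(j₀)` (ordered by
containment of row sets). -/
def PCovers (S : Finset (Fin m × Fin n)) (j₀ : Fin n) (Dβ Dα : Finset (Fin m × Fin n)) : Prop :=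
  PNode S j₀ Dα ∧ PNode S j₀ Dβ ∧ rowsOf Dα ⊂ rowsOf Dβ ∧
    ¬ ∃ Dγ, PNode S j₀ Dγ ∧ rowsOf Dα ⊂ rowsOf Dγ ∧ rowsOf Dγ ⊂ rowsOf Dβ

/-- `C⁺`: the sum of the entries of `u` indexed by `C`. -/
def cliqueSum (u : Fin m × Fin n → ℝ) (C : Finset (Fin m × Fin n)) : ℝ := ∑ x ∈ C, u x

/-- `u_{i+}`: the `i`-th row marginal of `u` over `S`. -/
noncomputable def rowMarg (S : Finset (Fin m × Fin n)) (u : Fin m × Fin n → ℝ) (i : Fin m) : ℝ :=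
  ∑ x ∈ S.filter (fun x => x.1 = i), u x

/-- `u_{+j}`: the `j`-th column marginal of `u` over `S`. -/
noncomputable def colMarg (S : Finset (Fin m × Fin n)) (u : Fin m × Fin n → ℝ) (j : Fin n) : ℝ :=
  ∑ x ∈ S.filter (fun x => x.2 = j), u x

/-- `u_{++}`: the total sum of `u` over `S`. -/
def totalSum (S : Finset (Fin m × Fin n)) (u : Fin m × Fin n → ℝ) : ℝ := ∑ x ∈ S, u x

section AuxProofs

variable {m n : ℕ} {S : Finset (Fin m × Fin n)}

lemma qi_adj (i : Fin m) (j : Fin n) :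
    (qiGraph m n S).Adj (Sum.inl i) (Sum.inr j) ↔ (i, j) ∈ S := by
  simp [qiGraph, SimpleGraph.fromRel_adj]

lemma mem_colRows {j₀ j : Fin n} {i : Fin m} :
    i ∈ colRows S j₀ j ↔ (i, j) ∈ S ∧ (i, j₀) ∈ S := by simp [colRows]

lemma mem_inducedClique {j₀ j : Fin n} {p : Fin m × Fin n} :
    p ∈ inducedClique S j₀ j ↔ p.1 ∈ colRows S j₀ j ∧ colRows S j₀ j ⊆ colRows S j₀ p.2 := by
  simp [inducedClique]

lemma colRows_comparable (hS : DoublyChordalBipartite (qiGraph m n S)) (j₀ j k : Fin n)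
    (i₁ : Fin m) (h1 : i₁ ∈ colRows S j₀ j) (h2 : i₁ ∈ colRows S j₀ k) :
    colRows S j₀ j ⊆ colRows S j₀ k ∨ colRows S j₀ k ⊆ colRows S j₀ j := by
  by_contra hcon
  push_neg at hcon
  obtain ⟨hc1, hc2⟩ := hcon
  obtain ⟨a, ha, hak⟩ := Finset.not_subset.1 hc1
  obtain ⟨b, hb, hbj⟩ := Finset.not_subset.1 hc2
  rw [mem_colRows] at h1 h2 ha hb
  have hak' : (a, k) ∉ S := fun h => hak (mem_colRows.2 ⟨h, ha.2⟩)
  have hbj' : (b, j) ∉ S := fun h => hbj (mem_colRows.2 ⟨h, hb.2⟩)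
  have hjk : j ≠ k := fun h => hak' (h ▸ ha.1)
  have hjj0 : j ≠ j₀ := fun h => hbj' (h ▸ hb.2)
  have hkj0 : k ≠ j₀ := fun h => hak' (h ▸ ha.2)
  have hab : a ≠ b := fun h => hbj' (h ▸ ha.1)
  have hai : a ≠ i₁ := fun h => hak' (h ▸ h2.1)
  have hbi : b ≠ i₁ := fun h => hbj' (h ▸ h1.1)
  -- the 6-cycle  j - a - j₀ - b - k - i₁ - j
  let c : (qiGraph m n S).Walk (Sum.inr j) (Sum.inr j) :=
    SimpleGraph.Walk.cons ((qi_adj a j).2 ha.1).symm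
      (SimpleGraph.Walk.cons ((qi_adj a j₀).2 ha.2)
        (SimpleGraph.Walk.cons ((qi_adj b j₀).2 hb.2).symm
          (SimpleGraph.Walk.cons ((qi_adj b k).2 hb.1)
            (SimpleGraph.Walk.cons ((qi_adj i₁ k).2 h2.1).symm
              (SimpleGraph.Walk.cons ((qi_adj i₁ j).2 h1.1) .nil)))))
  have hcyc : c.IsCycle := by
    constructor
    · constructor
      · constructor
        simp [c, List.nodup_cons, Sym2.eq, Sym2.rel_iff', hjk, hjj0, hkj0,
          hab, hai, hbi, hjk.symm, hjj0.symm, hkj0.symm, hab.symm, hai.symm, hbi.symm]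
      · simp [c]
    · simp [c, List.nodup_cons, hjk, hjj0, hkj0, hab, hai, hbi,
        hjk.symm, hjj0.symm, hkj0.symm, hab.symm, hai.symm, hbi.symm]
  obtain ⟨e₁, e₂, hne, hcd1, hcd2⟩ := hS _ c hcyc (by simp [c])
  have key : ∀ e, IsChord (qiGraph m n S) c e → e = s(Sum.inl i₁, Sum.inr j₀) := by
    intro e he
    obtain ⟨heE, heNot, heSup⟩ := he
    induction e using Sym2.ind with
    | _ x y =>
      have hx := heSup x (by simp)
      have hy := heSup y (by simp)
      have hadj : (qiGraph m n S).Adj x y := heE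
      simp only [c, SimpleGraph.Walk.support_cons, SimpleGraph.Walk.support_nil,
        List.mem_cons, List.mem_singleton, List.not_mem_nil, or_false] at hx hy
      have hedges : s(x,y) ∉ c.edges := heNot
      simp only [c, SimpleGraph.Walk.edges_cons, SimpleGraph.Walk.edges_nil, List.mem_cons,
        List.not_mem_nil, or_false, not_or] at hedges
      rcases x with x | x <;> rcases y with y | y
      · exact absurd hadj (by simp [qiGraph, SimpleGraph.fromRel_adj])
      · have hxy : (x, y) ∈ S := (qi_adj x y).1 hadj
        rcases hx with hx | hx | hx | hx | hx | hx | hx <;>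
          rcases hy with hy | hy | hy | hy | hy | hy | hy <;>
          simp_all [Sym2.eq, Sym2.rel_iff']
      · have hxy : (y, x) ∈ S := (qi_adj y x).1 hadj.symm
        rcases hx with hx | hx | hx | hx | hx | hx | hx <;>
          rcases hy with hy | hy | hy | hy | hy | hy | hy <;>
          simp_all [Sym2.eq, Sym2.rel_iff']
      · exact absurd hadj (by simp [qiGraph, SimpleGraph.fromRel_adj])
  exact hne ((key e₁ hcd1).trans (key e₂ hcd2).symm)

lemma inducedClique_isGridClique (j₀ j : Fin n) (h : (colRows S j₀ j).Nonempty) :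
    IsGridClique S (inducedClique S j₀ j) := by
  obtain ⟨i, hi⟩ := h
  refine ⟨⟨(i, j), mem_inducedClique.2 ⟨hi, subset_rfl⟩⟩, ?_, ?_⟩
  · intro p hp
    obtain ⟨h1, h2⟩ := mem_inducedClique.1 hp
    have := mem_colRows.1 (h2 h1)
    exact (Prod.mk.eta (p := p)) ▸ this.1
  · intro p hp q hq
    obtain ⟨hp1, hp2⟩ := mem_inducedClique.1 hp
    obtain ⟨hq1, hq2⟩ := mem_inducedClique.1 hq
    exact mem_inducedClique.2 ⟨hp1, hq2⟩

lemma inducedClique_isMaxClique (j₀ j : Fin n) (h : (colRows S j₀ j).Nonempty) :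
    IsMaxClique S (inducedClique S j₀ j) := by
  refine ⟨inducedClique_isGridClique j₀ j h, ?_⟩
  intro C' hC' hsub
  obtain ⟨i₀, hi₀⟩ := h
  refine Finset.Subset.antisymm hsub ?_
  rintro ⟨i', k'⟩ hik
  have hsubJ0 : colRows S j₀ j ⊆ colRows S j₀ j₀ := by
    intro i hi; exact mem_colRows.2 ⟨(mem_colRows.1 hi).2, (mem_colRows.1 hi).2⟩
  have hj0C : (i₀, j₀) ∈ C' := hsub (mem_inducedClique.2 ⟨hi₀, hsubJ0⟩)
  have hjC : (i₀, j) ∈ C' := hsub (mem_inducedClique.2 ⟨hi₀, subset_rfl⟩)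
  have hcross := hC'.2.2
  have hij : ((i', k').1, (i₀, j).2) ∈ C' := hcross _ hik _ hjC
  have hij0 : ((i', k').1, (i₀, j₀).2) ∈ C' := hcross _ hik _ hj0C
  have hi'j : (i', j) ∈ S := hC'.2.1 hij
  have hi'j0 : (i', j₀) ∈ S := hC'.2.1 hij0
  refine mem_inducedClique.2 ⟨mem_colRows.2 ⟨hi'j, hi'j0⟩, ?_⟩
  intro i hi
  have hiC : (i, j) ∈ C' := hsub (mem_inducedClique.2 ⟨hi, subset_rfl⟩)
  have : ((i, j).1, (i', k').2) ∈ C' := hcross _ hiC _ hik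
  exact mem_colRows.2 ⟨hC'.2.1 this, (mem_colRows.1 hi).2⟩

end AuxProofs

/-- if `G_S` is doubly chordal bipartite, then for each block of columns
(w.r.t. a fixed column `j₀`) with nonempty row set, the induced clique is a maximal
clique of `S`; moreover every maximal clique of `S` meeting column `j₀` is induced by
some block. -/
theorem inducedClique_isMaxClique_and_surjective (m n : ℕ) (S : Finset (Fin m × Fin n))
    (hS : DoublyChordalBipartite (qiGraph m n S)) (j₀ : Fin n) :
    (∀ j : Fin n, (colRows S j₀ j).Nonempty → IsMaxClique S (inducedClique S j₀ j)) ∧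
    (∀ D : Finset (Fin m × Fin n), IsMaxClique S D → (∃ i, (i, j₀) ∈ D) →
      ∃ j : Fin n, (colRows S j₀ j).Nonempty ∧ D = inducedClique S j₀ j) := by
  constructor
  · exact fun j h => inducedClique_isMaxClique j₀ j h
  · rintro D hD ⟨i₁, hi₁⟩
    set T := D.image Prod.snd with hT
    have hTne : T.Nonempty := ⟨j₀, Finset.mem_image.2 ⟨(i₁, j₀), hi₁, rfl⟩⟩
    obtain ⟨j, hjT, hjmin⟩ := Finset.exists_min_image T (fun j => (colRows S j₀ j).card) hTne
    have cross := hD.1.2.2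
    have hsubS := hD.1.2.1
    have hmemT : ∀ k ∈ T, (i₁, k) ∈ D := by
      intro k hk
      obtain ⟨q, hq, hq2⟩ := Finset.mem_image.1 hk
      have := cross _ hi₁ _ hq
      rwa [hq2] at this
    have hi₁col : ∀ k ∈ T, i₁ ∈ colRows S j₀ k := fun k hk =>
      mem_colRows.2 ⟨hsubS (hmemT k hk), hsubS hi₁⟩
    have hjmin' : ∀ k ∈ T, colRows S j₀ j ⊆ colRows S j₀ k := by
      intro k hk
      rcases colRows_comparable hS j₀ j k i₁ (hi₁col j hjT) (hi₁col k hk) with h | h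
      · exact h
      · exact Finset.subset_of_eq (Finset.eq_of_subset_of_card_le h (hjmin k hk)).symm
    have hDsub : D ⊆ inducedClique S j₀ j := by
      rintro ⟨i, k⟩ hik
      have hkT : k ∈ T := Finset.mem_image.2 ⟨(i, k), hik, rfl⟩
      have hij : (i, j) ∈ D := cross _ hik _ (hmemT j hjT)
      have hij0 : (i, j₀) ∈ D := cross _ hik _ hi₁
      exact mem_inducedClique.2 ⟨mem_colRows.2 ⟨hsubS hij, hsubS hij0⟩, hjmin' k hkT⟩
    have hne : (colRows S j₀ j).Nonempty := ⟨i₁, hi₁col j hjT⟩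
    exact ⟨j, hne, hD.2 _ (inducedClique_isGridClique j₀ j hne) hDsub⟩
end

section
/- Let S ⊆ [m] × [n] with G_S doubly chordal bipartite. Fix a column j₀, let P(j₀) be the poset of maximal cliques intersecting column j₀ ordered by containment of row sets, and suppose D_α ⋖ D_β in P(j₀). If C ∈ Int(S) satisfies C ∩ N_{j₀} ≠ ∅ and rows(D_α) ⊆ rows(C), then either C = D_α ∩ D_β or rows(D_β) ⊆ rows(C). -/
open Finset

open scoped Classical

variable {m n : ℕ}

/-! ### Auxiliary machinery for the proof -/

section AuxQI

variable {S : Finset (Fin m × Fin n)}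

/-- The column indices of a subset of `S`. -/
noncomputable def colsOfQI (D : Finset (Fin m × Fin n)) : Finset (Fin n) := D.image Prod.snd

lemma mem_rowsOfQI {D : Finset (Fin m × Fin n)} {i : Fin m} :
    i ∈ rowsOf D ↔ ∃ j, (i, j) ∈ D := by
  constructor
  · intro h
    obtain ⟨⟨pi, pj⟩, hp, h⟩ := Finset.mem_image.1 h
    exact ⟨pj, by cases h; exact hp⟩
  · rintro ⟨j, hj⟩
    exact Finset.mem_image.2 ⟨(i, j), hj, rfl⟩

lemma mem_colsOfQI {D : Finset (Fin m × Fin n)} {j : Fin n} :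
    j ∈ colsOfQI D ↔ ∃ i, (i, j) ∈ D := by
  constructor
  · intro h
    obtain ⟨⟨pi, pj⟩, hp, h⟩ := Finset.mem_image.1 h
    exact ⟨pi, by cases h; exact hp⟩
  · rintro ⟨i, hi⟩
    exact Finset.mem_image.2 ⟨(i, j), hi, rfl⟩

lemma grid_mem_iff {D : Finset (Fin m × Fin n)} (hD : IsGridClique S D) {i : Fin m} {j : Fin n} :
    (i, j) ∈ D ↔ i ∈ rowsOf D ∧ j ∈ colsOfQI D := by
  constructor
  · intro h
    exact ⟨mem_rowsOfQI.2 ⟨j, h⟩, mem_colsOfQI.2 ⟨i, h⟩⟩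
  · rintro ⟨hi, hj⟩
    obtain ⟨j', hj'⟩ := mem_rowsOfQI.1 hi
    obtain ⟨i', hi'⟩ := mem_colsOfQI.1 hj
    exact hD.2.2 (i, j') hj' (i', j) hi'

lemma maxClique_row_closed {D : Finset (Fin m × Fin n)} (hD : IsMaxClique S D) {i : Fin m}
    (h : ∀ j ∈ colsOfQI D, (i, j) ∈ S) : i ∈ rowsOf D := by
  classical
  obtain ⟨p, hp⟩ := hD.1.1
  have hpc : p.2 ∈ colsOfQI D := mem_colsOfQI.2 ⟨p.1, by simpa using hp⟩
  have hgrid : IsGridClique S ((insert i (rowsOf D)) ×ˢ colsOfQI D) := by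
    refine ⟨⟨(i, p.2), Finset.mem_product.2 ⟨Finset.mem_insert_self _ _, hpc⟩⟩, ?_, ?_⟩
    · rintro ⟨q1, q2⟩ hq
      obtain ⟨hq1, hq2⟩ := Finset.mem_product.1 hq
      rcases Finset.mem_insert.1 hq1 with h1 | h1
      · rw [show q1 = i from h1]; exact h q2 hq2
      · exact hD.1.2.1 ((grid_mem_iff hD.1).2 ⟨h1, hq2⟩)
    · intro p' hp' q' hq'
      exact Finset.mem_product.2 ⟨(Finset.mem_product.1 hp').1, (Finset.mem_product.1 hq').2⟩
  have hsub : D ⊆ (insert i (rowsOf D)) ×ˢ colsOfQI D := by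
    intro q hq
    exact Finset.mem_product.2 ⟨Finset.mem_insert_of_mem (Finset.mem_image_of_mem _ hq),
      Finset.mem_image_of_mem _ hq⟩
  have heq := hD.2 _ hgrid hsub
  have hmem : (i, p.2) ∈ D := by
    rw [heq]
    exact Finset.mem_product.2 ⟨Finset.mem_insert_self _ _, hpc⟩
  exact mem_rowsOfQI.2 ⟨p.2, hmem⟩

lemma maxClique_col_closed {D : Finset (Fin m × Fin n)} (hD : IsMaxClique S D) {j : Fin n}
    (h : ∀ i ∈ rowsOf D, (i, j) ∈ S) : j ∈ colsOfQI D := by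
  classical
  obtain ⟨p, hp⟩ := hD.1.1
  have hpr : p.1 ∈ rowsOf D := mem_rowsOfQI.2 ⟨p.2, by simpa using hp⟩
  have hgrid : IsGridClique S (rowsOf D ×ˢ insert j (colsOfQI D)) := by
    refine ⟨⟨(p.1, j), Finset.mem_product.2 ⟨hpr, Finset.mem_insert_self _ _⟩⟩, ?_, ?_⟩
    · rintro ⟨q1, q2⟩ hq
      obtain ⟨hq1, hq2⟩ := Finset.mem_product.1 hq
      rcases Finset.mem_insert.1 hq2 with h1 | h1
      · rw [show q2 = j from h1]; exact h q1 hq1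
      · exact hD.1.2.1 ((grid_mem_iff hD.1).2 ⟨hq1, h1⟩)
    · intro p' hp' q' hq'
      exact Finset.mem_product.2 ⟨(Finset.mem_product.1 hp').1, (Finset.mem_product.1 hq').2⟩
  have hsub : D ⊆ rowsOf D ×ˢ insert j (colsOfQI D) := by
    intro q hq
    exact Finset.mem_product.2 ⟨Finset.mem_image_of_mem _ hq,
      Finset.mem_insert_of_mem (Finset.mem_image_of_mem _ hq)⟩
  have heq := hD.2 _ hgrid hsub
  have hmem : (p.1, j) ∈ D := by
    rw [heq]
    exact Finset.mem_product.2 ⟨hpr, Finset.mem_insert_self _ _⟩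
  exact mem_colsOfQI.2 ⟨p.1, hmem⟩

/-- Column support function: columns supported on all of `R'`. -/
noncomputable def TFQI (S : Finset (Fin m × Fin n)) (R' : Finset (Fin m)) : Finset (Fin n) :=
  Finset.univ.filter (fun j => ∀ i ∈ R', (i, j) ∈ S)

/-- Row support function: rows supported on all of `T'`. -/
noncomputable def RFQI (S : Finset (Fin m × Fin n)) (T' : Finset (Fin n)) : Finset (Fin m) :=
  Finset.univ.filter (fun i => ∀ j ∈ T', (i, j) ∈ S)

lemma mem_TFQI {R' : Finset (Fin m)} {j : Fin n} :
    j ∈ TFQI S R' ↔ ∀ i ∈ R', (i, j) ∈ S := by simp [TFQI]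

lemma mem_RFQI {T' : Finset (Fin n)} {i : Fin m} :
    i ∈ RFQI S T' ↔ ∀ j ∈ T', (i, j) ∈ S := by simp [RFQI]

lemma rowsOf_product {X : Finset (Fin m)} {Y : Finset (Fin n)} (hY : Y.Nonempty) :
    rowsOf (X ×ˢ Y) = X := by
  ext i
  rw [mem_rowsOfQI]
  constructor
  · rintro ⟨j, hj⟩
    exact (Finset.mem_product.1 hj).1
  · intro hi
    obtain ⟨j, hj⟩ := hY
    exact ⟨j, Finset.mem_product.2 ⟨hi, hj⟩⟩

lemma clo_isMaxClique {R' : Finset (Fin m)} (hR : R'.Nonempty) (hT : (TFQI S R').Nonempty) :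
    IsMaxClique S (RFQI S (TFQI S R') ×ˢ TFQI S R') := by
  have hext : R' ⊆ RFQI S (TFQI S R') := by
    intro i hi
    rw [mem_RFQI]
    intro j hj
    exact mem_TFQI.1 hj i hi
  obtain ⟨r, hr⟩ := hR
  obtain ⟨t, ht⟩ := hT
  constructor
  · refine ⟨⟨(r, t), Finset.mem_product.2 ⟨hext hr, ht⟩⟩, ?_, ?_⟩
    · rintro ⟨i, j⟩ hij
      obtain ⟨h1, h2⟩ := Finset.mem_product.1 hij
      exact mem_RFQI.1 h1 j h2
    · intro p hp q hq
      exact Finset.mem_product.2 ⟨(Finset.mem_product.1 hp).1, (Finset.mem_product.1 hq).2⟩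
  · intro C' hC' hsub
    refine Finset.Subset.antisymm hsub ?_
    rintro ⟨i, j⟩ hij
    refine Finset.mem_product.2 ⟨?_, ?_⟩
    · rw [mem_RFQI]
      intro j' hj'
      have h1 : (r, j') ∈ C' := hsub (Finset.mem_product.2 ⟨hext hr, hj'⟩)
      exact hC'.2.1 (hC'.2.2 (i, j) hij (r, j') h1)
    · rw [mem_TFQI]
      intro i' hi'
      have h1 : (i', t) ∈ C' := hsub (Finset.mem_product.2 ⟨hext hi', ht⟩)
      exact hC'.2.1 (hC'.2.2 (i', t) h1 (i, j) hij)

lemma mem_maxCliquesQI {D : Finset (Fin m × Fin n)} : D ∈ maxCliques S ↔ IsMaxClique S D := by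
  simp only [maxCliques, Finset.mem_filter, Finset.mem_powerset]
  exact ⟨fun h => h.2, fun h => ⟨h.1.2.1, h⟩⟩

lemma mem_pairIntsQI {C : Finset (Fin m × Fin n)} : C ∈ pairInts S ↔
    ∃ D₁ D₂, IsMaxClique S D₁ ∧ IsMaxClique S D₂ ∧ D₁ ≠ D₂ ∧ D₁ ∩ D₂ = C := by
  simp only [pairInts, Finset.mem_image, Finset.mem_filter, Finset.mem_product]
  constructor
  · rintro ⟨⟨D₁, D₂⟩, ⟨⟨h1, h2⟩, hne⟩, heq⟩
    exact ⟨D₁, D₂, mem_maxCliquesQI.1 h1, mem_maxCliquesQI.1 h2, hne, heq⟩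
  · rintro ⟨D₁, D₂, h1, h2, hne, heq⟩
    exact ⟨(D₁, D₂), ⟨⟨mem_maxCliquesQI.2 h1, mem_maxCliquesQI.2 h2⟩, hne⟩, heq⟩

lemma cover_dichotomy {j₀ : Fin n} {Dα Dβ : Finset (Fin m × Fin n)}
    (hcov : PCovers S j₀ Dβ Dα) (R' : Finset (Fin m)) (hne : R'.Nonempty)
    (h1 : rowsOf Dα ⊆ R') (h2 : R' ⊆ rowsOf Dβ) (hsupp : ∀ i ∈ R', (i, j₀) ∈ S)
    (hcl : ∀ i, (∀ j, (∀ i' ∈ R', (i', j) ∈ S) → (i, j) ∈ S) → i ∈ R') :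
    R' = rowsOf Dα ∨ R' = rowsOf Dβ := by
  classical
  have hj₀ : j₀ ∈ TFQI S R' := mem_TFQI.2 hsupp
  have hT : (TFQI S R').Nonempty := ⟨j₀, hj₀⟩
  have hmax := clo_isMaxClique (S := S) hne hT
  have hrowsγ : rowsOf (RFQI S (TFQI S R') ×ˢ TFQI S R') = R' := by
    rw [rowsOf_product hT]
    apply Finset.Subset.antisymm
    · intro i hi
      apply hcl
      intro j hj
      exact mem_RFQI.1 hi j (mem_TFQI.2 hj)
    · intro i hi
      rw [mem_RFQI]
      intro j hj
      exact mem_TFQI.1 hj i hi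
  obtain ⟨r, hr⟩ := hne
  have hrmem : r ∈ RFQI S (TFQI S R') := by
    rw [mem_RFQI]
    intro j hj
    exact mem_TFQI.1 hj r hr
  have hnode : PNode S j₀ (RFQI S (TFQI S R') ×ˢ TFQI S R') :=
    ⟨hmax, r, Finset.mem_product.2 ⟨hrmem, hj₀⟩⟩
  by_contra hcon
  push_neg at hcon
  obtain ⟨hca, hcb⟩ := hcon
  refine hcov.2.2.2 ⟨_, hnode, ?_, ?_⟩
  · rw [hrowsγ, Finset.ssubset_def]
    exact ⟨h1, fun hh => hca (Finset.Subset.antisymm hh h1)⟩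
  · rw [hrowsγ, Finset.ssubset_def]
    exact ⟨h2, fun hh => hcb (Finset.Subset.antisymm h2 hh)⟩

lemma qi_adj_iff {i : Fin m} {j : Fin n} :
    (qiGraph m n S).Adj (Sum.inl i) (Sum.inr j) ↔ (i, j) ∈ S := by
  constructor
  · rintro ⟨hne, ⟨p, hp, h1, h2⟩ | ⟨p, hp, h1, h2⟩⟩
    · cases h1; cases h2; simpa using hp
    · exact absurd h1 (by simp)
  · intro h
    exact ⟨by simp, Or.inl ⟨(i, j), h, rfl, rfl⟩⟩

lemma qi_adj_cases {x y : Fin m ⊕ Fin n} (h : (qiGraph m n S).Adj x y) :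
    (∃ i j, (i, j) ∈ S ∧ x = Sum.inl i ∧ y = Sum.inr j) ∨
    (∃ i j, (i, j) ∈ S ∧ x = Sum.inr j ∧ y = Sum.inl i) := by
  rcases h with ⟨hne, ⟨p, hp, h1, h2⟩ | ⟨p, hp, h1, h2⟩⟩
  · exact Or.inl ⟨p.1, p.2, hp, h1, h2⟩
  · exact Or.inr ⟨p.1, p.2, hp, h2, h1⟩

set_option maxHeartbeats 2000000 in
lemma sixCycle (hS : DoublyChordalBipartite (qiGraph m n S))
    {a b c : Fin m} {j₀ j₁ j₂ : Fin n}
    (hab : a ≠ b) (hac : a ≠ c) (hbc : b ≠ c)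
    (h01 : j₀ ≠ j₁) (h02 : j₀ ≠ j₂) (h12 : j₁ ≠ j₂)
    (ha0 : (a, j₀) ∈ S) (ha1 : (a, j₁) ∈ S) (hb0 : (b, j₀) ∈ S) (hb2 : (b, j₂) ∈ S)
    (hc1 : (c, j₁) ∈ S) (hc2 : (c, j₂) ∈ S)
    (ha2 : (a, j₂) ∉ S) (hb1 : (b, j₁) ∉ S) : False := by
  classical
  let G := qiGraph m n S
  -- walk: inl a → inr j₁ → inl c → inr j₂ → inl b → inr j₀ → inl a
  have e1 : G.Adj (Sum.inl a) (Sum.inr j₁) := qi_adj_iff.2 ha1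
  have e2 : G.Adj (Sum.inr j₁) (Sum.inl c) := (qi_adj_iff.2 hc1).symm
  have e3 : G.Adj (Sum.inl c) (Sum.inr j₂) := qi_adj_iff.2 hc2
  have e4 : G.Adj (Sum.inr j₂) (Sum.inl b) := (qi_adj_iff.2 hb2).symm
  have e5 : G.Adj (Sum.inl b) (Sum.inr j₀) := qi_adj_iff.2 hb0
  have e6 : G.Adj (Sum.inr j₀) (Sum.inl a) := (qi_adj_iff.2 ha0).symm
  let w : G.Walk (Sum.inl a) (Sum.inl a) :=
    .cons e1 (.cons e2 (.cons e3 (.cons e4 (.cons e5 (.cons e6 .nil)))))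
  have hcyc : w.IsCycle := by
    rw [SimpleGraph.Walk.isCycle_def, SimpleGraph.Walk.isTrail_def]
    refine ⟨?_, by simp [w], ?_⟩
    · simp only [w, SimpleGraph.Walk.edges_cons, SimpleGraph.Walk.edges_nil,
        List.nodup_cons, List.mem_cons, List.not_mem_nil, or_false, List.mem_singleton,
        List.nodup_nil, and_true, Sym2.eq_iff, Sum.inl.injEq, Sum.inr.injEq]
      push_neg
      tauto
    · simp only [w, SimpleGraph.Walk.support_cons, SimpleGraph.Walk.support_nil,
        List.tail_cons, List.nodup_cons, List.mem_cons, List.not_mem_nil, or_false,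
        List.mem_singleton, List.nodup_nil, and_true, Sum.inl.injEq, Sum.inr.injEq,
        Sum.inl_ne_inr, Sum.inr_ne_inl, false_or, or_false, not_or]
      tauto
  have hlen : 6 ≤ w.length := by
    have : w.length = 6 := rfl
    omega
  obtain ⟨f₁, f₂, hne, h1, h2⟩ := hS _ w hcyc hlen
  have main : ∀ (i : Fin m) (j : Fin n), (i, j) ∈ S → s(Sum.inl i, Sum.inr j) ∉ w.edges →
      Sum.inl i ∈ w.support → Sum.inr j ∈ w.support → i = c ∧ j = j₀ := by
    have hsup : ∀ z, z ∈ w.support → z = Sum.inl a ∨ z = Sum.inr j₁ ∨ z = Sum.inl c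
        ∨ z = Sum.inr j₂ ∨ z = Sum.inl b ∨ z = Sum.inr j₀ := by
      intro z hz
      simp only [w, SimpleGraph.Walk.support_cons, SimpleGraph.Walk.support_nil,
        List.mem_cons, List.not_mem_nil, or_false, List.mem_singleton] at hz
      tauto
    have hedges : ∀ (i : Fin m) (j : Fin n), s(Sum.inl i, Sum.inr j) ∈ w.edges ↔
        (i = a ∧ j = j₁) ∨ (i = c ∧ j = j₁) ∨ (i = c ∧ j = j₂) ∨ (i = b ∧ j = j₂)
        ∨ (i = b ∧ j = j₀) ∨ (i = a ∧ j = j₀) := by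
      intro i j
      simp only [w, SimpleGraph.Walk.edges_cons, SimpleGraph.Walk.edges_nil,
        List.mem_cons, List.not_mem_nil, or_false, Sym2.eq_iff, Sum.inl.injEq,
        Sum.inr.injEq, Sum.inl_ne_inr, Sum.inr_ne_inl, false_and, and_false, false_or,
        or_false]
      try tauto
    intro i j hij hnotedge hxs hys
    have hx := hsup _ hxs
    have hy := hsup _ hys
    rw [hedges] at hnotedge
    clear hxs hys hsup hedges h1 h2 hne f₁ f₂ hlen hcyc w e1 e2 e3 e4 e5 e6 G
    simp only [Sum.inl.injEq, Sum.inr.injEq, reduceCtorEq, false_or, or_false] at hx hy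
    rcases hx with rfl | rfl | rfl <;> rcases hy with rfl | rfl | rfl <;> tauto
  have key : ∀ e : Sym2 (Fin m ⊕ Fin n), IsChord G w e → e = s(Sum.inl c, Sum.inr j₀) := by
    intro e
    induction e using Sym2.ind with
    | _ x y =>
      rintro ⟨hedge, hnotedge, hsupp⟩
      rw [SimpleGraph.mem_edgeSet] at hedge
      rcases qi_adj_cases hedge with ⟨i, j, hij, hxe, hye⟩ | ⟨i, j, hij, hxe, hye⟩ <;>
        subst hxe <;> subst hye
      · obtain ⟨rfl, rfl⟩ := main i j hij hnotedge (hsupp _ (by simp)) (hsupp _ (by simp))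
        rfl
      · rw [Sym2.eq_swap] at hnotedge ⊢
        obtain ⟨rfl, rfl⟩ := main i j hij hnotedge (hsupp _ (by simp)) (hsupp _ (by simp))
        rfl
  exact hne ((key _ h1).trans (key _ h2).symm)

end AuxQI

/-- if `Dα ⋖ Dβ` in `P(j₀)` and `C ∈ Int(S)` meets column `j₀` with
`rows(Dα) ⊆ rows(C)`, then either `C = Dα ∩ Dβ` or `rows(Dβ) ⊆ rows(C)`. -/
theorem intersections_factor_out (m n : ℕ) (S : Finset (Fin m × Fin n))
    (hS : DoublyChordalBipartite (qiGraph m n S)) (j₀ : Fin n)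
    (Dα Dβ : Finset (Fin m × Fin n)) (hcov : PCovers S j₀ Dβ Dα)
    (C : Finset (Fin m × Fin n)) (hC : C ∈ maxInts S)
    (hCN : ∃ i, (i, j₀) ∈ C) (hrows : rowsOf Dα ⊆ rowsOf C) :
    C = Dα ∩ Dβ ∨ rowsOf Dβ ⊆ rowsOf C := by
  classical
  obtain ⟨hCp, hCmax⟩ := Finset.mem_filter.1 hC
  obtain ⟨D₁, D₂, hM1, hM2, hD12, hC12⟩ := mem_pairIntsQI.1 hCp
  obtain ⟨i₀, hi₀⟩ := hCN
  obtain ⟨⟨hMα, iα, hiα⟩, ⟨hMβ, iβ, hiβ⟩, hssub, hnomid⟩ := hcov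
  have hcov' : PCovers S j₀ Dβ Dα :=
    ⟨⟨hMα, iα, hiα⟩, ⟨hMβ, iβ, hiβ⟩, hssub, hnomid⟩
  have hCD₁ : C ⊆ D₁ := by rw [← hC12]; exact Finset.inter_subset_left
  have hCD₂ : C ⊆ D₂ := by rw [← hC12]; exact Finset.inter_subset_right
  have hCS : C ⊆ S := hCD₁.trans hM1.1.2.1
  have hgridC : IsGridClique S C := by
    refine ⟨⟨(i₀, j₀), hi₀⟩, hCS, fun p hp q hq => ?_⟩
    rw [← hC12] at hp hq ⊢
    exact Finset.mem_inter.2 ⟨hM1.1.2.2 p (Finset.mem_inter.1 hp).1 q (Finset.mem_inter.1 hq).1,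
      hM2.1.2.2 p (Finset.mem_inter.1 hp).2 q (Finset.mem_inter.1 hq).2⟩
  have memC : ∀ i j, ((i, j) ∈ C ↔ i ∈ rowsOf C ∧ j ∈ colsOfQI C) :=
    fun i j => grid_mem_iff hgridC
  have hj₀B : j₀ ∈ colsOfQI C := mem_colsOfQI.2 ⟨i₀, hi₀⟩
  have hi₀A : i₀ ∈ rowsOf C := mem_rowsOfQI.2 ⟨j₀, hi₀⟩
  have hAsupp : ∀ i ∈ rowsOf C, (i, j₀) ∈ S := fun i hi => hCS ((memC i j₀).2 ⟨hi, hj₀B⟩)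
  have hRαβ : rowsOf Dα ⊆ rowsOf Dβ := hssub.1
  have hRαne : (rowsOf Dα).Nonempty := ⟨iα, mem_rowsOfQI.2 ⟨j₀, hiα⟩⟩
  have hj₀Tβ : j₀ ∈ colsOfQI Dβ := mem_colsOfQI.2 ⟨iβ, hiβ⟩
  have hRβsupp : ∀ i ∈ rowsOf Dβ, (i, j₀) ∈ S := fun i hi =>
    hMβ.1.2.1 ((grid_mem_iff hMβ.1).2 ⟨hi, hj₀Tβ⟩)
  have hA1 : rowsOf C ⊆ rowsOf D₁ := Finset.image_subset_image hCD₁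
  have hA2 : rowsOf C ⊆ rowsOf D₂ := Finset.image_subset_image hCD₂
  have hB1 : colsOfQI C ⊆ colsOfQI D₁ := Finset.image_subset_image hCD₁
  have hB2 : colsOfQI C ⊆ colsOfQI D₂ := Finset.image_subset_image hCD₂
  -- closedness of the row set of C
  have hAcl : ∀ i, (∀ j, (∀ i' ∈ rowsOf C, (i', j) ∈ S) → (i, j) ∈ S) → i ∈ rowsOf C := by
    intro i hi
    have h₁ : i ∈ rowsOf D₁ := maxClique_row_closed hM1 (fun j hj =>
      hi j (fun i' hi' => hM1.1.2.1 ((grid_mem_iff hM1.1).2 ⟨hA1 hi', hj⟩)))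
    have h₂ : i ∈ rowsOf D₂ := maxClique_row_closed hM2 (fun j hj =>
      hi j (fun i' hi' => hM2.1.2.1 ((grid_mem_iff hM2.1).2 ⟨hA2 hi', hj⟩)))
    have hmem : (i, j₀) ∈ C := by
      rw [← hC12]
      exact Finset.mem_inter.2 ⟨(grid_mem_iff hM1.1).2 ⟨h₁, hB1 hj₀B⟩,
        (grid_mem_iff hM2.1).2 ⟨h₂, hB2 hj₀B⟩⟩
    exact mem_rowsOfQI.2 ⟨j₀, hmem⟩
  -- first application of the cover dichotomy
  have hdi1 := cover_dichotomy hcov' (rowsOf C ∩ rowsOf Dβ)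
    (hRαne.mono (Finset.subset_inter hrows hRαβ))
    (Finset.subset_inter hrows hRαβ) Finset.inter_subset_right
    (fun i hi => hAsupp i (Finset.mem_inter.1 hi).1)
    (by
      intro i hi
      refine Finset.mem_inter.2 ⟨?_, ?_⟩
      · apply hAcl
        intro j hj
        exact hi j (fun i' hi' => hj i' (Finset.mem_inter.1 hi').1)
      · apply maxClique_row_closed hMβ
        intro j hj
        exact hi j (fun i' hi' =>
          hMβ.1.2.1 ((grid_mem_iff hMβ.1).2 ⟨(Finset.mem_inter.1 hi').2, hj⟩)))
  rcases hdi1 with hR1α | hR1β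
  swap
  · -- rows Dβ ⊆ rows C
    right
    intro i hi
    rw [← hR1β] at hi
    exact (Finset.mem_inter.1 hi).1
  -- Step 1 : rowsOf C = rowsOf Dα
  have hARα : rowsOf C = rowsOf Dα := by
    refine Finset.Subset.antisymm ?_ hrows
    intro a ha
    by_contra haRα
    have haRβ : a ∉ rowsOf Dβ := fun h => haRα (by
      rw [← hR1α]; exact Finset.mem_inter.2 ⟨ha, h⟩)
    obtain ⟨j₂, hj₂, haj₂⟩ : ∃ j ∈ colsOfQI Dβ, (a, j) ∉ S := by
      by_contra hcc
      push_neg at hcc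
      exact haRβ (maxClique_row_closed hMβ hcc)
    obtain ⟨b, hbβ, hbα⟩ := Finset.exists_of_ssubset hssub
    have hbA : b ∉ rowsOf C := fun h => hbα (by
      rw [← hR1α]; exact Finset.mem_inter.2 ⟨h, hbβ⟩)
    obtain ⟨j₁, hj₁all, hbj₁⟩ : ∃ j, (∀ i ∈ rowsOf C, (i, j) ∈ S) ∧ (b, j) ∉ S := by
      by_contra hcc
      push_neg at hcc
      exact hbA (hAcl b (fun j hj => hcc j hj))
    obtain ⟨cc, hccα⟩ := hRαne
    exact sixCycle hS
      (by rintro rfl; exact hbA ha)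
      (by rintro rfl; exact haRα hccα)
      (by rintro rfl; exact hbα hccα)
      (by rintro rfl; exact hbj₁ (hRβsupp b hbβ))
      (by rintro rfl; exact haj₂ (hAsupp a ha))
      (by rintro rfl; exact haj₂ (hj₁all a ha))
      (hAsupp a ha) (hj₁all a ha) (hRβsupp b hbβ)
      (hMβ.1.2.1 ((grid_mem_iff hMβ.1).2 ⟨hbβ, hj₂⟩))
      (hj₁all cc (hrows hccα))
      (hMβ.1.2.1 ((grid_mem_iff hMβ.1).2 ⟨hRαβ hccα, hj₂⟩))
      haj₂ hbj₁
  -- Step 2 : colsOfQI C ⊆ colsOfQI Dβ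
  set RB := Finset.univ.filter (fun i => ∀ j ∈ colsOfQI C, (i, j) ∈ S) with hRBdef
  have memRB : ∀ i, i ∈ RB ↔ ∀ j ∈ colsOfQI C, (i, j) ∈ S := by
    intro i; rw [hRBdef]; simp
  have hARB : rowsOf C ⊆ RB := fun i hi =>
    (memRB i).2 (fun j hj => hCS ((memC i j).2 ⟨hi, hj⟩))
  have hD₁RB : rowsOf D₁ ⊆ RB := fun i hi =>
    (memRB i).2 (fun j hj => hM1.1.2.1 ((grid_mem_iff hM1.1).2 ⟨hi, hB1 hj⟩))
  have hD₂RB : rowsOf D₂ ⊆ RB := fun i hi =>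
    (memRB i).2 (fun j hj => hM2.1.2.1 ((grid_mem_iff hM2.1).2 ⟨hi, hB2 hj⟩))
  have hBcl : ∀ j, (∀ i ∈ RB, (i, j) ∈ S) → j ∈ colsOfQI C := by
    intro j hj
    have h₁ : j ∈ colsOfQI D₁ := maxClique_col_closed hM1 (fun i hi => hj i (hD₁RB hi))
    have h₂ : j ∈ colsOfQI D₂ := maxClique_col_closed hM2 (fun i hi => hj i (hD₂RB hi))
    have hmem : (i₀, j) ∈ C := by
      rw [← hC12]
      exact Finset.mem_inter.2 ⟨(grid_mem_iff hM1.1).2 ⟨hA1 hi₀A, h₁⟩,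
        (grid_mem_iff hM2.1).2 ⟨hA2 hi₀A, h₂⟩⟩
    exact mem_colsOfQI.2 ⟨i₀, hmem⟩
  have hRBsupp : ∀ i ∈ RB, (i, j₀) ∈ S := fun i hi => (memRB i).1 hi j₀ hj₀B
  have hBTβ : colsOfQI C ⊆ colsOfQI Dβ := by
    by_contra hnB
    obtain ⟨j₁, hj₁B, hj₁Tβ⟩ := Finset.not_subset.1 hnB
    obtain ⟨b', hb'β, hb'j₁⟩ : ∃ i ∈ rowsOf Dβ, (i, j₁) ∉ S := by
      by_contra hcc
      push_neg at hcc
      exact hj₁Tβ (maxClique_col_closed hMβ hcc)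
    have hb'RB : b' ∉ RB := fun h => hb'j₁ ((memRB b').1 h j₁ hj₁B)
    have hb'α : b' ∉ rowsOf Dα := fun h => hb'RB (hARB (hARα ▸ h))
    obtain ⟨a, haRB, haRα⟩ : ∃ a ∈ RB, a ∉ rowsOf Dα := by
      by_contra hcc
      push_neg at hcc
      have hRBA : RB = rowsOf C := Finset.Subset.antisymm
        (fun i hi => by rw [hARα]; exact hcc i hi) hARB
      have hCmaxCl : IsMaxClique S C := by
        refine ⟨hgridC, fun C' hC' hsub => ?_⟩
        refine Finset.Subset.antisymm hsub ?_
        rintro ⟨i, j⟩ hij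
        have hiRB : i ∈ RB := (memRB i).2 (fun j' hj' =>
          hC'.2.1 (hC'.2.2 (i, j) hij (i₀, j') (hsub ((memC i₀ j').2 ⟨hi₀A, hj'⟩))))
        have hjB : j ∈ colsOfQI C := by
          apply hBcl
          intro i' hi'
          rw [hRBA] at hi'
          exact hC'.2.1 (hC'.2.2 (i', j₀) (hsub ((memC i' j₀).2 ⟨hi', hj₀B⟩)) (i, j) hij)
        exact (memC i j).2 ⟨by rw [← hRBA]; exact hiRB, hjB⟩
      exact hD12 ((hCmaxCl.2 D₁ hM1.1 hCD₁).symm.trans (hCmaxCl.2 D₂ hM2.1 hCD₂))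
    have hRαRB : rowsOf Dα ⊆ RB := fun i hi => hARB (by rw [hARα]; exact hi)
    have hdi2 := cover_dichotomy hcov' (RB ∩ rowsOf Dβ)
      (hRαne.mono (Finset.subset_inter hRαRB hRαβ))
      (Finset.subset_inter hRαRB hRαβ) Finset.inter_subset_right
      (fun i hi => hRBsupp i (Finset.mem_inter.1 hi).1)
      (by
        intro i hi
        refine Finset.mem_inter.2 ⟨?_, ?_⟩
        · refine (memRB i).2 (fun j hj => ?_)
          exact hi j (fun i' hi' => (memRB i').1 (Finset.mem_inter.1 hi').1 j hj)
        · apply maxClique_row_closed hMβ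
          intro j hj
          exact hi j (fun i' hi' =>
            hMβ.1.2.1 ((grid_mem_iff hMβ.1).2 ⟨(Finset.mem_inter.1 hi').2, hj⟩)))
    rcases hdi2 with h2α | h2β
    swap
    · refine hb'RB ?_
      have : b' ∈ RB ∩ rowsOf Dβ := by rw [h2β]; exact hb'β
      exact (Finset.mem_inter.1 this).1
    have haRβ : a ∉ rowsOf Dβ := fun h => haRα (by
      rw [← h2α]; exact Finset.mem_inter.2 ⟨haRB, h⟩)
    obtain ⟨j₂, hj₂, haj₂⟩ : ∃ j ∈ colsOfQI Dβ, (a, j) ∉ S := by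
      by_contra hcc
      push_neg at hcc
      exact haRβ (maxClique_row_closed hMβ hcc)
    obtain ⟨cc, hccα⟩ := hRαne
    have hccRB : cc ∈ RB := hRαRB hccα
    exact sixCycle hS
      (by rintro rfl; exact hb'RB haRB)
      (by rintro rfl; exact haRα hccα)
      (by rintro rfl; exact hb'RB hccRB)
      (by rintro rfl; exact hb'j₁ (hRβsupp b' hb'β))
      (by rintro rfl; exact haj₂ (hRBsupp a haRB))
      (by rintro rfl; exact haj₂ ((memRB a).1 haRB j₁ hj₁B))
      (hRBsupp a haRB) ((memRB a).1 haRB j₁ hj₁B) (hRβsupp b' hb'β)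
      (hMβ.1.2.1 ((grid_mem_iff hMβ.1).2 ⟨hb'β, hj₂⟩))
      ((memRB cc).1 hccRB j₁ hj₁B)
      (hMβ.1.2.1 ((grid_mem_iff hMβ.1).2 ⟨hRαβ hccα, hj₂⟩))
      haj₂ hb'j₁
  -- Step 3 : C = Dα ∩ Dβ
  left
  have hαβne : Dα ≠ Dβ := by
    intro h
    rw [h] at hssub
    exact ssubset_irrefl _ hssub
  apply hCmax
  · exact mem_pairIntsQI.2 ⟨Dα, Dβ, hMα, hMβ, hαβne, rfl⟩
  · rintro ⟨i, j⟩ hp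
    have hiA : i ∈ rowsOf C := mem_rowsOfQI.2 ⟨j, hp⟩
    have hjB : j ∈ colsOfQI C := mem_colsOfQI.2 ⟨i, hp⟩
    refine Finset.mem_inter.2 ⟨?_, ?_⟩
    · refine (grid_mem_iff hMα.1).2 ⟨hARα ▸ hiA, ?_⟩
      apply maxClique_col_closed hMα
      intro i' hi'
      exact hCS ((memC i' j).2 ⟨by rw [hARα]; exact hi', hjB⟩)
    · exact (grid_mem_iff hMβ.1).2 ⟨hRαβ (hARα ▸ hiA), hBTβ hjB⟩
end

section
/- Let S ⊆ [m] × [n] with G_S doubly chordal bipartite, let u ∈ ℝ^S, and for (i,j) ∈ S define x_{ij} = u_{i+} · u_{+j} · (∏_{C ∈ Int(ij)} C⁺) · (∏_{D ∈ Max(S) \ Max(ij)} D⁺). Then for every column j₀, Σ_{i : (i,j₀) ∈ S} x_{i j₀} = u_{+j₀} · ∏_{D ∈ Max(S)} D⁺. -/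
open Finset

open scoped Classical

variable {m n : ℕ}

/-- The cleared-denominator quantities `x_{ij}`. -/
noncomputable def xval (S : Finset (Fin m × Fin n)) (u : Fin m × Fin n → ℝ)
    (x : Fin m × Fin n) : ℝ :=
  rowMarg S u x.1 * colMarg S u x.2 * (∏ C ∈ maxIntsAt S x, cliqueSum u C) *
    ∏ D ∈ maxCliques S \ maxCliquesAt S x, cliqueSum u D

/-!
The maximal cliques of `S` meeting column `j₀` have laminar row sets: two such cliques that
share a row without being nested would produce a 6-cycle of `G_S` with at most one chord.
Ordered by their row sets they form a tree whose root `T` contains every row of column `j₀`.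
For a row `i`, `Max(ij₀)` is the chain of cliques from the smallest one containing `i` up to
`T`, and `Int(ij₀)` consists of the intersections `D ∩ parent D` of consecutive links.
After factoring out `u_{+j₀} · ∏_{D ∌ j₀} D⁺`, the claim becomes the identity
`Σ_{i ∈ E} u_{i+} · ∏_{chain of i below E} (D ∩ parent D)⁺ · ∏_{D ⊆ E, i ∉ D} D⁺ = ∏_{D ⊆ E} D⁺`
for every node `E`, proved by induction on the subtree: a row of `E` either has
neighbourhood exactly `cols E` or lies in a unique child `c`, and `E⁺` splits accordingly into
the row sums of the first kind and the sums `(c ∩ E)⁺`.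
-/

lemma filter_maximal_eq_of_forall_subset {β : Type*} {P Q : Finset (Finset β)}
    [DecidablePred fun p : Finset β => ∀ p' ∈ P, p ⊆ p' → p = p'] (hQP : Q ⊆ P)
    (hdom : ∀ p ∈ P, ∃ q ∈ Q, p ⊆ q)
    (hanti : ∀ q ∈ Q, ∀ q' ∈ Q, q ⊆ q' → q = q') :
    P.filter (fun p => ∀ p' ∈ P, p ⊆ p' → p = p') = Q := by
  ext p
  rw [mem_filter]
  constructor
  · rintro ⟨hp, hmax⟩
    obtain ⟨q, hq, hpq⟩ := hdom p hp
    rwa [hmax q (hQP hq) hpq]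
  · intro hp
    refine ⟨hQP hp, fun p' hp' hpp' => ?_⟩
    obtain ⟨q, hq, hp'q⟩ := hdom p' hp'
    obtain rfl := hanti p hp q hq (hpp'.trans hp'q)
    exact hpp'.antisymm hp'q

noncomputable def colsOf (D : Finset (Fin m × Fin n)) : Finset (Fin n) := D.image Prod.snd

lemma mem_maxCliques {S D : Finset (Fin m × Fin n)} : D ∈ maxCliques S ↔ IsMaxClique S D := by
  simp only [maxCliques, mem_filter, mem_powerset, and_iff_right_iff_imp]
  exact fun h => h.1.2.1

lemma isGridClique_product {S : Finset (Fin m × Fin n)} {R : Finset (Fin m)}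
    {T : Finset (Fin n)} (hR : R.Nonempty) (hT : T.Nonempty) (h : ∀ i ∈ R, ∀ j ∈ T, (i, j) ∈ S) :
    IsGridClique S (R ×ˢ T) :=
  ⟨hR.product hT, fun p hp => h p.1 (mem_product.1 hp).1 p.2 (mem_product.1 hp).2,
    fun _ hp _ hq => mem_product.2 ⟨(mem_product.1 hp).1, (mem_product.1 hq).2⟩⟩

lemma cliqueSum_product (u : Fin m × Fin n → ℝ) (R : Finset (Fin m)) (T : Finset (Fin n)) :
    cliqueSum u (R ×ˢ T) = ∑ i ∈ R, cliqueSum u ({i} ×ˢ T) := by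
  simp only [cliqueSum, sum_product, sum_singleton]

lemma rowMarg_eq_cliqueSum (S : Finset (Fin m × Fin n)) (u : Fin m × Fin n → ℝ) (i : Fin m) :
    rowMarg S u i = cliqueSum u ({i} ×ˢ univ.filter (fun j => (i, j) ∈ S)) := by
  rw [rowMarg, cliqueSum]
  congr 1
  ext ⟨a, b⟩
  simp only [mem_filter, mem_product, mem_singleton, mem_univ, true_and]
  constructor
  · rintro ⟨h, rfl⟩
    exact ⟨rfl, h⟩
  · rintro ⟨rfl, h⟩
    exact ⟨h, rfl⟩

namespace IsGridClique

variable {S C : Finset (Fin m × Fin n)}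

lemma eq_product (h : IsGridClique S C) : C = rowsOf C ×ˢ colsOf C := by
  ext ⟨i, j⟩
  simp only [mem_product, rowsOf, colsOf, mem_image]
  constructor
  · exact fun hij => ⟨⟨(i, j), hij, rfl⟩, ⟨(i, j), hij, rfl⟩⟩
  · rintro ⟨⟨p, hp, rfl⟩, ⟨q, hq, rfl⟩⟩
    exact h.2.2 p hp q hq

lemma mem_iff (h : IsGridClique S C) {i : Fin m} {j : Fin n} :
    (i, j) ∈ C ↔ i ∈ rowsOf C ∧ j ∈ colsOf C := by
  conv_lhs => rw [h.eq_product]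
  exact mem_product

lemma mem_of_rowsOf_colsOf (h : IsGridClique S C) {i : Fin m} {j : Fin n}
    (hi : i ∈ rowsOf C) (hj : j ∈ colsOf C) : (i, j) ∈ S :=
  h.2.1 (h.mem_iff.2 ⟨hi, hj⟩)

lemma rowsOf_nonempty (h : IsGridClique S C) : (rowsOf C).Nonempty := h.1.image _

lemma colsOf_nonempty (h : IsGridClique S C) : (colsOf C).Nonempty := h.1.image _

lemma exists_isMaxClique_superset (h : IsGridClique S C) : ∃ D, IsMaxClique S D ∧ C ⊆ D := by
  set A := S.powerset.filter (fun D => IsGridClique S D ∧ C ⊆ D)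
  have hCA : C ∈ A := mem_filter.2 ⟨mem_powerset.2 h.2.1, h, subset_rfl⟩
  obtain ⟨D, hD, hDmax⟩ := A.exists_max_image card ⟨C, hCA⟩
  obtain ⟨-, hDclique, hCD⟩ := mem_filter.1 hD
  refine ⟨D, ⟨hDclique, fun C' hC' hDC' => eq_of_subset_of_card_le hDC' (hDmax C' ?_)⟩, hCD⟩
  exact mem_filter.2 ⟨mem_powerset.2 hC'.2.1, hC', hCD.trans hDC'⟩

end IsGridClique

namespace IsMaxClique

variable {S D E : Finset (Fin m × Fin n)}

lemma product_subset (hD : IsMaxClique S D) {R : Finset (Fin m)} {T : Finset (Fin n)}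
    (hR : rowsOf D ⊆ R) (hT : colsOf D ⊆ T) (hRT : ∀ i ∈ R, ∀ j ∈ T, (i, j) ∈ S) :
    R ×ˢ T ⊆ D := by
  have hDRT : D ⊆ R ×ˢ T := hD.1.eq_product ▸ product_subset_product hR hT
  rw [hD.2 _ (isGridClique_product (hD.1.rowsOf_nonempty.mono hR)
    (hD.1.colsOf_nonempty.mono hT) hRT) hDRT]

lemma mem_rowsOf_of_forall (hD : IsMaxClique S D) {i : Fin m}
    (h : ∀ j ∈ colsOf D, (i, j) ∈ S) : i ∈ rowsOf D := by
  obtain ⟨j, hj⟩ := hD.1.colsOf_nonempty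
  have hRT : ∀ i' ∈ insert i (rowsOf D), ∀ j ∈ colsOf D, (i', j) ∈ S := by
    intro i' hi' j hj
    rcases mem_insert.1 hi' with rfl | hi'
    · exact h j hj
    · exact hD.1.mem_of_rowsOf_colsOf hi' hj
  have := hD.product_subset (subset_insert i _) subset_rfl hRT
    (mk_mem_product (mem_insert_self i _) hj)
  exact (hD.1.mem_iff.1 this).1

lemma mem_colsOf_of_forall (hD : IsMaxClique S D) {j : Fin n}
    (h : ∀ i ∈ rowsOf D, (i, j) ∈ S) : j ∈ colsOf D := by
  obtain ⟨i, hi⟩ := hD.1.rowsOf_nonempty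
  have hRT : ∀ i ∈ rowsOf D, ∀ j' ∈ insert j (colsOf D), (i, j') ∈ S := by
    intro i hi j' hj'
    rcases mem_insert.1 hj' with rfl | hj'
    · exact h i hi
    · exact hD.1.mem_of_rowsOf_colsOf hi hj'
  have := hD.product_subset subset_rfl (subset_insert j _) hRT
    (mk_mem_product hi (mem_insert_self j _))
  exact (hD.1.mem_iff.1 this).2

lemma colsOf_subset_of_rowsOf_subset (hD : IsMaxClique S D) (hE : IsMaxClique S E)
    (h : rowsOf D ⊆ rowsOf E) : colsOf E ⊆ colsOf D :=
  fun _ hj => hD.mem_colsOf_of_forall fun _ hi => hE.1.mem_of_rowsOf_colsOf (h hi) hj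

lemma rowsOf_subset_of_colsOf_subset (hD : IsMaxClique S D) (hE : IsMaxClique S E)
    (h : colsOf D ⊆ colsOf E) : rowsOf E ⊆ rowsOf D :=
  fun _ hi => hD.mem_rowsOf_of_forall fun _ hj => hE.1.mem_of_rowsOf_colsOf hi (h hj)

lemma eq_of_rowsOf_eq (hD : IsMaxClique S D) (hE : IsMaxClique S E)
    (h : rowsOf D = rowsOf E) : D = E := by
  have hcols := (hD.colsOf_subset_of_rowsOf_subset hE h.le).antisymm
    (hE.colsOf_subset_of_rowsOf_subset hD h.ge)
  rw [hD.1.eq_product, hE.1.eq_product, h, hcols]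

lemma inter_eq_product (hD : IsMaxClique S D) (hE : IsMaxClique S E)
    (h : rowsOf D ⊆ rowsOf E) : D ∩ E = rowsOf D ×ˢ colsOf E := by
  have hcols := hD.colsOf_subset_of_rowsOf_subset hE h
  ext ⟨i, j⟩
  rw [mem_inter, hD.1.mem_iff, hE.1.mem_iff, mem_product]
  exact ⟨fun h' => ⟨h'.1.1, h'.2.2⟩, fun h' => ⟨⟨h'.1, hcols h'.2⟩, ⟨h h'.1, h'.2⟩⟩⟩

end IsMaxClique

lemma exists_eq_of_mem_edgeSet_qiGraph {S : Finset (Fin m × Fin n)}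
    {e : Sym2 (Fin m ⊕ Fin n)} (he : e ∈ (qiGraph m n S).edgeSet) :
    ∃ i j, (i, j) ∈ S ∧ e = s(Sum.inl i, Sum.inr j) := by
  induction e using Sym2.ind with
  | _ a b =>
    rw [SimpleGraph.mem_edgeSet, qiGraph, SimpleGraph.fromRel_adj] at he
    rcases he.2 with ⟨p, hp, rfl, rfl⟩ | ⟨p, hp, rfl, rfl⟩
    · exact ⟨p.1, p.2, hp, rfl⟩
    · exact ⟨p.1, p.2, hp, Sym2.eq_swap⟩

lemma qiGraph_adj_inl_inr {S : Finset (Fin m × Fin n)} {i : Fin m} {j : Fin n}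
    (h : (i, j) ∈ S) : (qiGraph m n S).Adj (Sum.inl i) (Sum.inr j) := by
  rw [qiGraph, SimpleGraph.fromRel_adj]
  exact ⟨Sum.inl_ne_inr, Or.inl ⟨(i, j), h, rfl, rfl⟩⟩

/-- The hypotheses describe the 6-cycle `r₁ – j₀ – r₂ – j₂ – r – j₁ – r₁` of `G_S`; its only
possible chords are `(r₁, j₂)`, `(r₂, j₁)` and `(r, j₀)`. -/
lemma DoublyChordalBipartite.mem_or_mem_of_hexagon {S : Finset (Fin m × Fin n)}
    (hS : DoublyChordalBipartite (qiGraph m n S)) {r r₁ r₂ : Fin m} {j₀ j₁ j₂ : Fin n}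
    (h₁₀ : (r₁, j₀) ∈ S) (h₂₀ : (r₂, j₀) ∈ S) (h₂₂ : (r₂, j₂) ∈ S) (h₂ : (r, j₂) ∈ S)
    (h₁ : (r, j₁) ∈ S) (h₁₁ : (r₁, j₁) ∈ S) : (r₁, j₂) ∈ S ∨ (r₂, j₁) ∈ S := by
  by_contra! h
  obtain ⟨h₁₂, h₂₁⟩ := h
  have : r ≠ r₁ := by rintro rfl; exact h₁₂ h₂
  have : r ≠ r₂ := by rintro rfl; exact h₂₁ h₁
  have : r₁ ≠ r₂ := by rintro rfl; exact h₂₁ h₁₁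
  have : j₀ ≠ j₁ := by rintro rfl; exact h₂₁ h₂₀
  have : j₀ ≠ j₂ := by rintro rfl; exact h₁₂ h₁₀
  have : j₁ ≠ j₂ := by rintro rfl; exact h₁₂ h₁₁
  let c : (qiGraph m n S).Walk (Sum.inl r₁) (Sum.inl r₁) :=
    .cons (qiGraph_adj_inl_inr h₁₀) <| .cons (qiGraph_adj_inl_inr h₂₀).symm <|
    .cons (qiGraph_adj_inl_inr h₂₂) <| .cons (qiGraph_adj_inl_inr h₂).symm <|
    .cons (qiGraph_adj_inl_inr h₁) <| .cons (qiGraph_adj_inl_inr h₁₁).symm .nil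
  have hc : c.IsCycle := by
    rw [SimpleGraph.Walk.cons_isCycle_iff, SimpleGraph.Walk.isPath_def]
    simp [*, Ne.symm]
  have hchord : ∀ e, IsChord _ c e → e = s(Sum.inl r, Sum.inr j₀) := by
    rintro e ⟨he, hnot, hsupp⟩
    obtain ⟨i, j, hij, rfl⟩ := exists_eq_of_mem_edgeSet_qiGraph he
    have hi := hsupp _ (Sym2.mem_mk_left _ _)
    have hj := hsupp _ (Sym2.mem_mk_right _ _)
    simp only [c, SimpleGraph.Walk.support_cons, SimpleGraph.Walk.support_nil,
      SimpleGraph.Walk.edges_cons, SimpleGraph.Walk.edges_nil, List.mem_cons,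
      List.not_mem_nil, or_false, Sum.inl.injEq, Sum.inr.injEq, reduceCtorEq, false_or]
      at hi hj hnot
    rcases hi with rfl | rfl | rfl | rfl <;> rcases hj with rfl | rfl | rfl <;>
      simp_all [Sym2.eq_swap]
  obtain ⟨e₁, e₂, hne, he₁, he₂⟩ := hS _ c hc (by simp [c])
  exact hne ((hchord _ he₁).trans (hchord _ he₂).symm)

section ColumnForest

variable {S : Finset (Fin m × Fin n)} {j₀ : Fin n}

noncomputable def colCliques (S : Finset (Fin m × Fin n)) (j₀ : Fin n) :
    Finset (Finset (Fin m × Fin n)) :=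
  (maxCliques S).filter (fun D => j₀ ∈ colsOf D)

lemma mem_colCliques {D : Finset (Fin m × Fin n)} :
    D ∈ colCliques S j₀ ↔ IsMaxClique S D ∧ j₀ ∈ colsOf D := by
  rw [colCliques, mem_filter, mem_maxCliques]

lemma isMaxClique_of_mem_colCliques {D : Finset (Fin m × Fin n)} (hD : D ∈ colCliques S j₀) :
    IsMaxClique S D :=
  (mem_colCliques.1 hD).1

lemma eq_of_mem_colCliques_of_rowsOf_eq {D E : Finset (Fin m × Fin n)}
    (hD : D ∈ colCliques S j₀) (hE : E ∈ colCliques S j₀) (h : rowsOf D = rowsOf E) : D = E :=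
  (isMaxClique_of_mem_colCliques hD).eq_of_rowsOf_eq (isMaxClique_of_mem_colCliques hE) h

lemma rowsOf_ssubset_of_mem_colCliques {D E : Finset (Fin m × Fin n)}
    (hD : D ∈ colCliques S j₀) (hE : E ∈ colCliques S j₀) (h : rowsOf D ⊆ rowsOf E)
    (hne : D ≠ E) : rowsOf D ⊂ rowsOf E :=
  ssubset_of_subset_of_ne h fun h' => hne (eq_of_mem_colCliques_of_rowsOf_eq hD hE h')

lemma DoublyChordalBipartite.rowsOf_subset_or_subset
    (hS : DoublyChordalBipartite (qiGraph m n S)) {D E : Finset (Fin m × Fin n)}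
    (hD : D ∈ colCliques S j₀) (hE : E ∈ colCliques S j₀)
    {r : Fin m} (hrD : r ∈ rowsOf D) (hrE : r ∈ rowsOf E) :
    rowsOf D ⊆ rowsOf E ∨ rowsOf E ⊆ rowsOf D := by
  obtain ⟨hDmax, hjD⟩ := mem_colCliques.1 hD
  obtain ⟨hEmax, hjE⟩ := mem_colCliques.1 hE
  by_contra! h
  obtain ⟨r₁, hr₁D, hr₁E⟩ := not_subset.1 h.1
  obtain ⟨r₂, hr₂E, hr₂D⟩ := not_subset.1 h.2
  obtain ⟨j₁, hj₁, h₂₁⟩ : ∃ j ∈ colsOf D, (r₂, j) ∉ S := by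
    by_contra! h'
    exact hr₂D (hDmax.mem_rowsOf_of_forall h')
  obtain ⟨j₂, hj₂, h₁₂⟩ : ∃ j ∈ colsOf E, (r₁, j) ∉ S := by
    by_contra! h'
    exact hr₁E (hEmax.mem_rowsOf_of_forall h')
  have := hS.mem_or_mem_of_hexagon (hDmax.1.mem_of_rowsOf_colsOf hr₁D hjD)
    (hEmax.1.mem_of_rowsOf_colsOf hr₂E hjE) (hEmax.1.mem_of_rowsOf_colsOf hr₂E hj₂)
    (hEmax.1.mem_of_rowsOf_colsOf hrE hj₂) (hDmax.1.mem_of_rowsOf_colsOf hrD hj₁)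
    (hDmax.1.mem_of_rowsOf_colsOf hr₁D hj₁)
  tauto

noncomputable def colCliquesAbove (S : Finset (Fin m × Fin n)) (j₀ : Fin n)
    (D : Finset (Fin m × Fin n)) : Finset (Finset (Fin m × Fin n)) :=
  (colCliques S j₀).filter (fun E => rowsOf D ⊂ rowsOf E)

/-- The parent of `D` in the forest of `colCliques S j₀`: a clique above `D` with fewest rows
(by laminarity it is the unique cover of `D`); `∅` when nothing lies above `D`. -/
noncomputable def colParent (S : Finset (Fin m × Fin n)) (j₀ : Fin n)
    (D : Finset (Fin m × Fin n)) : Finset (Fin m × Fin n) :=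
  if h : (colCliquesAbove S j₀ D).Nonempty then
    ((colCliquesAbove S j₀ D).exists_min_image (fun E => (rowsOf E).card) h).choose
  else ∅

lemma colParent_spec {D : Finset (Fin m × Fin n)} (h : (colCliquesAbove S j₀ D).Nonempty) :
    colParent S j₀ D ∈ colCliquesAbove S j₀ D ∧
      ∀ E ∈ colCliquesAbove S j₀ D, (rowsOf (colParent S j₀ D)).card ≤ (rowsOf E).card := by
  rw [colParent, dif_pos h]
  exact ((colCliquesAbove S j₀ D).exists_min_image _ h).choose_spec

lemma colParent_mem {D E : Finset (Fin m × Fin n)} (hE : E ∈ colCliquesAbove S j₀ D) :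
    colParent S j₀ D ∈ colCliques S j₀ ∧ rowsOf D ⊂ rowsOf (colParent S j₀ D) :=
  mem_filter.1 (colParent_spec ⟨E, hE⟩).1

lemma DoublyChordalBipartite.rowsOf_colParent_subset
    (hS : DoublyChordalBipartite (qiGraph m n S)) {D E : Finset (Fin m × Fin n)}
    (hD : D ∈ colCliques S j₀) (hE : E ∈ colCliquesAbove S j₀ D) :
    rowsOf (colParent S j₀ D) ⊆ rowsOf E := by
  obtain ⟨hP, hDP⟩ := colParent_mem hE
  obtain ⟨hEcol, hDE⟩ := mem_filter.1 hE
  obtain ⟨i, hi⟩ := (isMaxClique_of_mem_colCliques hD).1.rowsOf_nonempty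
  rcases hS.rowsOf_subset_or_subset hP hEcol (hDP.subset hi) (hDE.subset hi) with h | h
  · exact h
  · rw [eq_of_subset_of_card_le h ((colParent_spec ⟨E, hE⟩).2 E hE)]

lemma inter_colParent_eq_product {D E : Finset (Fin m × Fin n)} (hD : D ∈ colCliques S j₀)
    (hE : E ∈ colCliquesAbove S j₀ D) :
    D ∩ colParent S j₀ D = rowsOf D ×ˢ colsOf (colParent S j₀ D) := by
  obtain ⟨hP, hDP⟩ := colParent_mem hE
  exact (isMaxClique_of_mem_colCliques hD).inter_eq_product
    (isMaxClique_of_mem_colCliques hP) hDP.subset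

noncomputable def chainBelow (S : Finset (Fin m × Fin n)) (j₀ : Fin n) (i : Fin m)
    (E : Finset (Fin m × Fin n)) : Finset (Finset (Fin m × Fin n)) :=
  (colCliques S j₀).filter (fun D => i ∈ rowsOf D ∧ rowsOf D ⊂ rowsOf E)

noncomputable def offChain (S : Finset (Fin m × Fin n)) (j₀ : Fin n) (i : Fin m)
    (E : Finset (Fin m × Fin n)) : Finset (Finset (Fin m × Fin n)) :=
  (colCliques S j₀).filter (fun D => rowsOf D ⊆ rowsOf E ∧ i ∉ rowsOf D)

noncomputable def colCliquesWithin (S : Finset (Fin m × Fin n)) (j₀ : Fin n)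
    (E : Finset (Fin m × Fin n)) : Finset (Finset (Fin m × Fin n)) :=
  (colCliques S j₀).filter (fun D => rowsOf D ⊆ rowsOf E)

noncomputable def colChildren (S : Finset (Fin m × Fin n)) (j₀ : Fin n)
    (E : Finset (Fin m × Fin n)) : Finset (Finset (Fin m × Fin n)) :=
  (colCliques S j₀).filter (fun D => rowsOf D ⊂ rowsOf E ∧ colParent S j₀ D = E)

noncomputable def leafRows (S : Finset (Fin m × Fin n)) (j₀ : Fin n)
    (E : Finset (Fin m × Fin n)) : Finset (Fin m) :=
  (rowsOf E).filter (fun i => chainBelow S j₀ i E = ∅)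

/-- The factor of `xval S u (i, j₀)` that depends on `i`, computed within the subtree
below `E`. -/
noncomputable def chainWeight (S : Finset (Fin m × Fin n)) (u : Fin m × Fin n → ℝ)
    (j₀ : Fin n) (E : Finset (Fin m × Fin n)) (i : Fin m) : ℝ :=
  rowMarg S u i * (∏ D ∈ chainBelow S j₀ i E, cliqueSum u (D ∩ colParent S j₀ D)) *
    ∏ D ∈ offChain S j₀ i E, cliqueSum u D

lemma mem_colCliquesAbove_of_mem_chainBelow {i : Fin m} {D E : Finset (Fin m × Fin n)}
    (hE : E ∈ colCliques S j₀) (hD : D ∈ chainBelow S j₀ i E) : E ∈ colCliquesAbove S j₀ D :=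
  mem_filter.2 ⟨hE, (mem_filter.1 hD).2.2⟩

lemma DoublyChordalBipartite.rowsOf_subset_or_subset_of_mem_colChildren
    (hS : DoublyChordalBipartite (qiGraph m n S)) {c D E : Finset (Fin m × Fin n)}
    (hc : c ∈ colChildren S j₀ E) (hD : D ∈ colCliques S j₀) {i : Fin m}
    (hic : i ∈ rowsOf c) (hiD : i ∈ rowsOf D) : rowsOf D ⊆ rowsOf c ∨ rowsOf E ⊆ rowsOf D := by
  obtain ⟨hccol, -, hpar⟩ := mem_filter.1 hc
  rcases hS.rowsOf_subset_or_subset hD hccol hiD hic with hDc | hcD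
  · exact Or.inl hDc
  rcases hcD.eq_or_ssubset with hcD | hcD
  · exact Or.inl hcD.ge
  · exact Or.inr (hpar ▸ hS.rowsOf_colParent_subset hccol (mem_filter.2 ⟨hD, hcD⟩))

lemma DoublyChordalBipartite.exists_mem_colChildren
    (hS : DoublyChordalBipartite (qiGraph m n S)) {E : Finset (Fin m × Fin n)}
    (hE : E ∈ colCliques S j₀) {i : Fin m} (hb : (chainBelow S j₀ i E).Nonempty) :
    ∃ c ∈ colChildren S j₀ E, i ∈ rowsOf c := by
  obtain ⟨c, hc, hcmax⟩ := (chainBelow S j₀ i E).exists_max_image (fun D => (rowsOf D).card) hb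
  obtain ⟨hccol, hic, hcE⟩ := mem_filter.1 hc
  have hEabove := mem_colCliquesAbove_of_mem_chainBelow hE hc
  obtain ⟨hP, hcP⟩ := colParent_mem hEabove
  have hPE := hS.rowsOf_colParent_subset hccol hEabove
  have hpar : colParent S j₀ c = E := by
    by_contra hne
    have hPbelow : colParent S j₀ c ∈ chainBelow S j₀ i E :=
      mem_filter.2 ⟨hP, hcP.subset hic, rowsOf_ssubset_of_mem_colCliques hP hE hPE hne⟩
    exact (card_lt_card hcP).not_ge (hcmax _ hPbelow)
  exact ⟨c, mem_filter.2 ⟨hccol, hcE, hpar⟩, hic⟩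

lemma DoublyChordalBipartite.pairwiseDisjoint_colChildren
    (hS : DoublyChordalBipartite (qiGraph m n S)) (E : Finset (Fin m × Fin n)) :
    (colChildren S j₀ E : Set (Finset (Fin m × Fin n))).PairwiseDisjoint rowsOf := by
  intro c hc c' hc' hne
  rw [Function.onFun, disjoint_left]
  intro i hic hic'
  have hcE := (mem_filter.1 hc).2.1
  have hc'E := (mem_filter.1 hc').2.1
  have hccol := (mem_filter.1 hc).1
  have hc'col := (mem_filter.1 hc').1
  have h₁ := (hS.rowsOf_subset_or_subset_of_mem_colChildren hc hc'col hic hic').resolve_right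
    hc'E.not_subset
  have h₂ := (hS.rowsOf_subset_or_subset_of_mem_colChildren hc' hccol hic' hic).resolve_right
    hcE.not_subset
  exact hne (eq_of_mem_colCliques_of_rowsOf_eq hccol hc'col (h₂.antisymm h₁))

lemma DoublyChordalBipartite.rowsOf_eq_leafRows_union
    (hS : DoublyChordalBipartite (qiGraph m n S)) {E : Finset (Fin m × Fin n)}
    (hE : E ∈ colCliques S j₀) :
    rowsOf E = leafRows S j₀ E ∪ (colChildren S j₀ E).biUnion rowsOf := by
  ext i
  simp only [leafRows, mem_union, mem_filter, mem_biUnion]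
  constructor
  · intro hi
    by_cases hb : chainBelow S j₀ i E = ∅
    · exact Or.inl ⟨hi, hb⟩
    · exact Or.inr (hS.exists_mem_colChildren hE (nonempty_iff_ne_empty.2 hb))
  · rintro (⟨hi, -⟩ | ⟨c, hc, hic⟩)
    · exact hi
    · exact (mem_filter.1 hc).2.1.subset hic

lemma disjoint_leafRows_biUnion_colChildren (E : Finset (Fin m × Fin n)) :
    Disjoint (leafRows S j₀ E) ((colChildren S j₀ E).biUnion rowsOf) := by
  rw [disjoint_left]
  intro i hi hib
  obtain ⟨c, hc, hic⟩ := mem_biUnion.1 hib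
  obtain ⟨hccol, hcE, -⟩ := mem_filter.1 hc
  have hcbelow : c ∈ chainBelow S j₀ i E := mem_filter.2 ⟨hccol, hic, hcE⟩
  rw [(mem_filter.1 hi).2] at hcbelow
  exact notMem_empty c hcbelow

lemma DoublyChordalBipartite.chainBelow_eq_insert
    (hS : DoublyChordalBipartite (qiGraph m n S)) {c E : Finset (Fin m × Fin n)}
    (hc : c ∈ colChildren S j₀ E) {i : Fin m} (hi : i ∈ rowsOf c) :
    chainBelow S j₀ i E = insert c (chainBelow S j₀ i c) := by
  obtain ⟨hccol, hcE, -⟩ := mem_filter.1 hc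
  ext D
  simp only [chainBelow, mem_insert, mem_filter]
  constructor
  · rintro ⟨hD, hiD, hDE⟩
    by_cases hDc : D = c
    · exact Or.inl hDc
    rcases hS.rowsOf_subset_or_subset_of_mem_colChildren hc hD hi hiD with h | h
    · exact Or.inr ⟨hD, hiD, rowsOf_ssubset_of_mem_colCliques hD hccol h hDc⟩
    · exact absurd h hDE.not_subset
  · rintro (rfl | ⟨hD, hiD, hDc⟩)
    · exact ⟨hccol, hi, hcE⟩
    · exact ⟨hD, hiD, hDc.trans hcE⟩

lemma DoublyChordalBipartite.offChain_eq_union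
    (hS : DoublyChordalBipartite (qiGraph m n S)) {c E : Finset (Fin m × Fin n)}
    (hE : E ∈ colCliques S j₀) (hc : c ∈ colChildren S j₀ E) {i : Fin m} (hi : i ∈ rowsOf c) :
    offChain S j₀ i E =
      offChain S j₀ i c ∪ ((colCliquesWithin S j₀ E).erase E \ colCliquesWithin S j₀ c) := by
  obtain ⟨hccol, hcE, -⟩ := mem_filter.1 hc
  ext D
  simp only [offChain, colCliquesWithin, mem_union, mem_sdiff, mem_erase, mem_filter]
  constructor
  · rintro ⟨hD, hDE, hiD⟩
    by_cases hDc : rowsOf D ⊆ rowsOf c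
    · exact Or.inl ⟨hD, hDc, hiD⟩
    · refine Or.inr ⟨⟨?_, hD, hDE⟩, fun h => hDc h.2⟩
      rintro rfl
      exact hiD (hcE.subset hi)
  · rintro (⟨hD, hDc, hiD⟩ | ⟨⟨hDE, hD, hDsub⟩, hDc⟩)
    · exact ⟨hD, hDc.trans hcE.subset, hiD⟩
    · refine ⟨hD, hDsub, fun hiD => ?_⟩
      rcases hS.rowsOf_subset_or_subset_of_mem_colChildren hc hD hi hiD with h | h
      · exact hDc ⟨hD, h⟩
      · exact hDE (eq_of_mem_colCliques_of_rowsOf_eq hD hE (hDsub.antisymm h))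

lemma DoublyChordalBipartite.chainWeight_eq_of_mem_colChildren
    (hS : DoublyChordalBipartite (qiGraph m n S)) (u : Fin m × Fin n → ℝ)
    {c E : Finset (Fin m × Fin n)} (hE : E ∈ colCliques S j₀) (hc : c ∈ colChildren S j₀ E)
    {i : Fin m} (hi : i ∈ rowsOf c) :
    chainWeight S u j₀ E i = cliqueSum u (c ∩ E) *
      (∏ D ∈ (colCliquesWithin S j₀ E).erase E \ colCliquesWithin S j₀ c, cliqueSum u D) *
        chainWeight S u j₀ c i := by
  have hc_notMem : c ∉ chainBelow S j₀ i c := fun h => (mem_filter.1 h).2.2.ne rfl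
  have hdisj : Disjoint (offChain S j₀ i c)
      ((colCliquesWithin S j₀ E).erase E \ colCliquesWithin S j₀ c) :=
    disjoint_sdiff.mono_left fun _ hD =>
      mem_filter.2 ⟨(mem_filter.1 hD).1, (mem_filter.1 hD).2.1⟩
  rw [chainWeight, chainWeight, hS.chainBelow_eq_insert hc hi, prod_insert hc_notMem,
    hS.offChain_eq_union hE hc hi, prod_union hdisj, (mem_filter.1 hc).2.2]
  ring

lemma filter_mem_eq_colsOf_of_mem_leafRows
    {E : Finset (Fin m × Fin n)} (hE : E ∈ colCliques S j₀) {i : Fin m}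
    (hi : i ∈ leafRows S j₀ E) :
    univ.filter (fun j => (i, j) ∈ S) = colsOf E := by
  obtain ⟨hEmax, hjE⟩ := mem_colCliques.1 hE
  obtain ⟨hiE, hleaf⟩ := mem_filter.1 hi
  set N := univ.filter (fun j => (i, j) ∈ S)
  have hEN : colsOf E ⊆ N := fun j hj =>
    mem_filter.2 ⟨mem_univ j, hEmax.1.mem_of_rowsOf_colsOf hiE hj⟩
  have hclique : IsGridClique S ({i} ×ˢ N) :=
    isGridClique_product (singleton_nonempty i) ⟨j₀, hEN hjE⟩
      fun i' hi' j hj => mem_singleton.1 hi' ▸ (mem_filter.1 hj).2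
  obtain ⟨D, hD, hiND⟩ := hclique.exists_isMaxClique_superset
  have hiND' : ∀ j ∈ N, i ∈ rowsOf D ∧ j ∈ colsOf D := fun j hj =>
    hD.1.mem_iff.1 (hiND (mk_mem_product (mem_singleton_self i) hj))
  have hND : N ⊆ colsOf D := fun j hj => (hiND' j hj).2
  have hiD : i ∈ rowsOf D := (hiND' j₀ (hEN hjE)).1
  have hDcol : D ∈ colCliques S j₀ := mem_colCliques.2 ⟨hD, hND (hEN hjE)⟩
  have hDE : D = E := by
    by_contra hne
    have hDbelow : D ∈ chainBelow S j₀ i E := mem_filter.2 ⟨hDcol, hiD,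
      rowsOf_ssubset_of_mem_colCliques hDcol hE (hEmax.rowsOf_subset_of_colsOf_subset hD
        (hEN.trans hND)) hne⟩
    rw [hleaf] at hDbelow
    exact notMem_empty D hDbelow
  exact (hDE ▸ hND).antisymm hEN

lemma offChain_eq_erase_of_mem_leafRows
    {E : Finset (Fin m × Fin n)} (hE : E ∈ colCliques S j₀) {i : Fin m}
    (hi : i ∈ leafRows S j₀ E) :
    offChain S j₀ i E = (colCliquesWithin S j₀ E).erase E := by
  obtain ⟨hiE, hleaf⟩ := mem_filter.1 hi
  ext D
  simp only [offChain, colCliquesWithin, mem_erase, mem_filter]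
  constructor
  · rintro ⟨hD, hDE, hiD⟩
    exact ⟨fun h => hiD (h ▸ hiE), hD, hDE⟩
  · rintro ⟨hne, hD, hDE⟩
    refine ⟨hD, hDE, fun hiD => ?_⟩
    have hDbelow : D ∈ chainBelow S j₀ i E :=
      mem_filter.2 ⟨hD, hiD, rowsOf_ssubset_of_mem_colCliques hD hE hDE hne⟩
    rw [hleaf] at hDbelow
    exact notMem_empty D hDbelow

lemma chainWeight_eq_of_mem_leafRows (u : Fin m × Fin n → ℝ)
    {E : Finset (Fin m × Fin n)} (hE : E ∈ colCliques S j₀) {i : Fin m}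
    (hi : i ∈ leafRows S j₀ E) :
    chainWeight S u j₀ E i =
      cliqueSum u ({i} ×ˢ colsOf E) * ∏ D ∈ (colCliquesWithin S j₀ E).erase E, cliqueSum u D := by
  rw [chainWeight, (mem_filter.1 hi).2, prod_empty, mul_one, rowMarg_eq_cliqueSum,
    filter_mem_eq_colsOf_of_mem_leafRows hE hi, offChain_eq_erase_of_mem_leafRows hE hi]

lemma colCliquesWithin_subset_erase {c E : Finset (Fin m × Fin n)} (hcE : rowsOf c ⊂ rowsOf E) :
    colCliquesWithin S j₀ c ⊆ (colCliquesWithin S j₀ E).erase E := fun _ hD =>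
  mem_erase.2 ⟨fun h => (h ▸ hcE).not_subset (mem_filter.1 hD).2,
    mem_filter.2 ⟨(mem_filter.1 hD).1, (mem_filter.1 hD).2.trans hcE.subset⟩⟩

lemma DoublyChordalBipartite.sum_chainWeight (hS : DoublyChordalBipartite (qiGraph m n S))
    (u : Fin m × Fin n → ℝ) {E : Finset (Fin m × Fin n)} (hE : E ∈ colCliques S j₀) :
    ∑ i ∈ rowsOf E, chainWeight S u j₀ E i = ∏ D ∈ colCliquesWithin S j₀ E, cliqueSum u D := by
  set P := ∏ D ∈ (colCliquesWithin S j₀ E).erase E, cliqueSum u D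
  have hEmax := isMaxClique_of_mem_colCliques hE
  have hleaf : ∀ i ∈ leafRows S j₀ E,
      chainWeight S u j₀ E i = cliqueSum u ({i} ×ˢ colsOf E) * P :=
    fun _ hi => chainWeight_eq_of_mem_leafRows u hE hi
  have hchild : ∀ c ∈ colChildren S j₀ E, ∑ i ∈ rowsOf c, chainWeight S u j₀ E i =
      ∑ i ∈ rowsOf c, cliqueSum u ({i} ×ˢ colsOf E) * P := by
    intro c hc
    obtain ⟨hccol, hcE, -⟩ := mem_filter.1 hc
    rw [sum_congr rfl fun i hi => hS.chainWeight_eq_of_mem_colChildren u hE hc hi, ← mul_sum,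
      hS.sum_chainWeight u hccol, mul_assoc, prod_sdiff (colCliquesWithin_subset_erase hcE), ← sum_mul,
      ← cliqueSum_product, (isMaxClique_of_mem_colCliques hccol).inter_eq_product hEmax hcE.subset]
  have hEwithin : E ∈ colCliquesWithin S j₀ E := mem_filter.2 ⟨hE, subset_rfl⟩
  have hpart := hS.rowsOf_eq_leafRows_union hE
  have hdisj := disjoint_leafRows_biUnion_colChildren (S := S) (j₀ := j₀) E
  have hchildren := hS.pairwiseDisjoint_colChildren (j₀ := j₀) E
  calc ∑ i ∈ rowsOf E, chainWeight S u j₀ E i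
      = ∑ i ∈ rowsOf E, cliqueSum u ({i} ×ˢ colsOf E) * P := by
        rw [hpart, sum_union hdisj, sum_union hdisj, sum_biUnion hchildren, sum_biUnion hchildren,
          sum_congr rfl hleaf, sum_congr rfl hchild]
    _ = cliqueSum u E * P := by rw [← sum_mul, ← cliqueSum_product, ← hEmax.1.eq_product]
    _ = ∏ D ∈ colCliquesWithin S j₀ E, cliqueSum u D := mul_prod_erase _ _ hEwithin
termination_by (rowsOf E).card
decreasing_by exact card_lt_card hcE

lemma mem_maxCliquesAt {D : Finset (Fin m × Fin n)} {i : Fin m} :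
    D ∈ maxCliquesAt S (i, j₀) ↔ D ∈ colCliques S j₀ ∧ i ∈ rowsOf D := by
  rw [maxCliquesAt, mem_filter, mem_colCliques, mem_maxCliques]
  exact ⟨fun ⟨hD, hiD⟩ => ⟨⟨hD, (hD.1.mem_iff.1 hiD).2⟩, (hD.1.mem_iff.1 hiD).1⟩,
    fun ⟨⟨hD, hjD⟩, hiD⟩ => ⟨hD, hD.1.mem_iff.2 ⟨hiD, hjD⟩⟩⟩

lemma DoublyChordalBipartite.inter_subset_inter_colParent
    (hS : DoublyChordalBipartite (qiGraph m n S)) {A B : Finset (Fin m × Fin n)}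
    (hA : A ∈ colCliques S j₀) (hB : B ∈ colCliquesAbove S j₀ A) :
    A ∩ B ⊆ A ∩ colParent S j₀ A := by
  obtain ⟨hBcol, hAB⟩ := mem_filter.1 hB
  have hBmax := isMaxClique_of_mem_colCliques hBcol
  have hPmax := isMaxClique_of_mem_colCliques (colParent_mem hB).1
  rw [(isMaxClique_of_mem_colCliques hA).inter_eq_product hBmax hAB.subset,
    inter_colParent_eq_product hA hB]
  exact product_subset_product subset_rfl
    (hPmax.colsOf_subset_of_rowsOf_subset hBmax (hS.rowsOf_colParent_subset hA hB))

lemma DoublyChordalBipartite.eq_of_inter_colParent_subset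
    (hS : DoublyChordalBipartite (qiGraph m n S)) {D D' E E' : Finset (Fin m × Fin n)}
    (hD : D ∈ colCliques S j₀) (hE : E ∈ colCliquesAbove S j₀ D)
    (hD' : D' ∈ colCliques S j₀) (hE' : E' ∈ colCliquesAbove S j₀ D')
    (h : D ∩ colParent S j₀ D ⊆ D' ∩ colParent S j₀ D') : D = D' := by
  obtain ⟨hP, -⟩ := colParent_mem hE
  obtain ⟨hP', hD'P'⟩ := colParent_mem hE'
  have hPmax := isMaxClique_of_mem_colCliques hP
  have hP'max := isMaxClique_of_mem_colCliques hP'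
  rw [inter_colParent_eq_product hD hE, inter_colParent_eq_product hD' hE'] at h
  have hrows := image_subset_image (f := Prod.fst) h
  have hcols := image_subset_image (f := Prod.snd) h
  rw [product_image_fst hPmax.1.colsOf_nonempty, product_image_fst hP'max.1.colsOf_nonempty]
    at hrows
  rw [product_image_snd (isMaxClique_of_mem_colCliques hD).1.rowsOf_nonempty,
    product_image_snd (isMaxClique_of_mem_colCliques hD').1.rowsOf_nonempty] at hcols
  by_contra hne
  have hPD' := hS.rowsOf_colParent_subset hD
    (mem_filter.2 ⟨hD', rowsOf_ssubset_of_mem_colCliques hD hD' hrows hne⟩)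
  exact hD'P'.not_subset ((hPmax.rowsOf_subset_of_colsOf_subset hP'max hcols).trans hPD')

lemma inter_colParent_mem_pairIntsAt {T D : Finset (Fin m × Fin n)} {i : Fin m}
    (hT : T ∈ colCliques S j₀) (hD : D ∈ chainBelow S j₀ i T) :
    D ∩ colParent S j₀ D ∈ pairIntsAt S (i, j₀) := by
  obtain ⟨hDcol, hiD, -⟩ := mem_filter.1 hD
  obtain ⟨hP, hDP⟩ := colParent_mem (mem_colCliquesAbove_of_mem_chainBelow hT hD)
  refine mem_image.2 ⟨(D, colParent S j₀ D), mem_filter.2 ⟨mk_mem_product ?_ ?_, ?_⟩, rfl⟩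
  · exact mem_maxCliquesAt.2 ⟨hDcol, hiD⟩
  · exact mem_maxCliquesAt.2 ⟨hP, hDP.subset hiD⟩
  · exact fun h => hDP.ne (congrArg rowsOf h)

lemma DoublyChordalBipartite.exists_subset_inter_colParent
    (hS : DoublyChordalBipartite (qiGraph m n S)) {T : Finset (Fin m × Fin n)}
    (htop : ∀ D ∈ colCliques S j₀, rowsOf D ⊆ rowsOf T) {i : Fin m}
    {C : Finset (Fin m × Fin n)} (hC : C ∈ pairIntsAt S (i, j₀)) :
    ∃ D ∈ chainBelow S j₀ i T, C ⊆ D ∩ colParent S j₀ D := by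
  obtain ⟨⟨A, B⟩, hAB, rfl⟩ := mem_image.1 hC
  obtain ⟨hAB, hne⟩ := mem_filter.1 hAB
  obtain ⟨⟨hA, hiA⟩, ⟨hB, hiB⟩⟩ :=
    (mem_product.1 hAB).imp mem_maxCliquesAt.1 mem_maxCliquesAt.1
  have key : ∀ {A B}, A ∈ colCliques S j₀ → B ∈ colCliques S j₀ → i ∈ rowsOf A →
      rowsOf A ⊆ rowsOf B → A ≠ B → ∃ D ∈ chainBelow S j₀ i T, A ∩ B ⊆ D ∩ colParent S j₀ D :=
    fun hA hB hiA hAB hne =>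
      have hAB := rowsOf_ssubset_of_mem_colCliques hA hB hAB hne
      ⟨_, mem_filter.2 ⟨hA, hiA, hAB.trans_subset (htop _ hB)⟩,
        hS.inter_subset_inter_colParent hA (mem_filter.2 ⟨hB, hAB⟩)⟩
  rcases hS.rowsOf_subset_or_subset hA hB hiA hiB with h | h
  · exact key hA hB hiA h hne
  · rw [inter_comm]
    exact key hB hA hiB h (Ne.symm hne)

lemma DoublyChordalBipartite.prod_maxIntsAt (hS : DoublyChordalBipartite (qiGraph m n S))
    {T : Finset (Fin m × Fin n)} (hT : T ∈ colCliques S j₀)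
    (htop : ∀ D ∈ colCliques S j₀, rowsOf D ⊆ rowsOf T) (i : Fin m) (u : Fin m × Fin n → ℝ) :
    ∏ C ∈ maxIntsAt S (i, j₀), cliqueSum u C =
      ∏ D ∈ chainBelow S j₀ i T, cliqueSum u (D ∩ colParent S j₀ D) := by
  have hanti : ∀ D ∈ chainBelow S j₀ i T, ∀ D' ∈ chainBelow S j₀ i T,
      D ∩ colParent S j₀ D ⊆ D' ∩ colParent S j₀ D' → D = D' := fun D hD D' hD' h =>
    hS.eq_of_inter_colParent_subset (mem_filter.1 hD).1
      (mem_colCliquesAbove_of_mem_chainBelow hT hD) (mem_filter.1 hD').1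
      (mem_colCliquesAbove_of_mem_chainBelow hT hD') h
  have hmax :
      maxIntsAt S (i, j₀) = (chainBelow S j₀ i T).image (fun D => D ∩ colParent S j₀ D) := by
    rw [maxIntsAt]
    refine filter_maximal_eq_of_forall_subset (P := pairIntsAt S (i, j₀)) ?_ ?_ ?_
    · exact image_subset_iff.2 fun D hD => inter_colParent_mem_pairIntsAt hT hD
    · intro C hC
      obtain ⟨D, hD, hCD⟩ := hS.exists_subset_inter_colParent htop hC
      exact ⟨_, mem_image_of_mem _ hD, hCD⟩
    · simp only [mem_image]
      rintro _ ⟨D, hD, rfl⟩ _ ⟨D', hD', rfl⟩ h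
      rw [hanti D hD D' hD' h]
  rw [hmax, prod_image fun D hD D' hD' h => hanti D hD D' hD' h.le]

lemma rowsOf_subset_of_mem_colCliques {D : Finset (Fin m × Fin n)}
    (hD : D ∈ colCliques S j₀) : rowsOf D ⊆ univ.filter (fun i => (i, j₀) ∈ S) := fun _ hi =>
  mem_filter.2 ⟨mem_univ _,
    (isMaxClique_of_mem_colCliques hD).1.mem_of_rowsOf_colsOf hi (mem_colCliques.1 hD).2⟩

lemma exists_mem_colCliques_rowsOf_eq (hcol : (univ.filter (fun i => (i, j₀) ∈ S)).Nonempty) :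
    ∃ T ∈ colCliques S j₀, rowsOf T = univ.filter (fun i => (i, j₀) ∈ S) := by
  set I := univ.filter (fun i => (i, j₀) ∈ S)
  have hclique : IsGridClique S (I ×ˢ {j₀}) :=
    isGridClique_product hcol (singleton_nonempty j₀) fun _ hi _ hj =>
      mem_singleton.1 hj ▸ (mem_filter.1 hi).2
  obtain ⟨T, hT, hIT⟩ := hclique.exists_isMaxClique_superset
  obtain ⟨i, hi⟩ := hcol
  have hTcol : T ∈ colCliques S j₀ :=
    mem_colCliques.2 ⟨hT, (hT.1.mem_iff.1 (hIT (mk_mem_product hi (mem_singleton_self j₀)))).2⟩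
  refine ⟨T, hTcol, (rowsOf_subset_of_mem_colCliques hTcol).antisymm fun i' hi' => ?_⟩
  exact (hT.1.mem_iff.1 (hIT (mk_mem_product hi' (mem_singleton_self j₀)))).1

lemma maxCliques_sdiff_maxCliquesAt {T : Finset (Fin m × Fin n)}
    (htop : ∀ D ∈ colCliques S j₀, rowsOf D ⊆ rowsOf T) (i : Fin m) :
    maxCliques S \ maxCliquesAt S (i, j₀) =
      (maxCliques S \ colCliques S j₀) ∪ offChain S j₀ i T := by
  ext D
  simp only [mem_sdiff, mem_union, offChain, mem_filter, mem_maxCliquesAt]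
  by_cases hD : D ∈ colCliques S j₀
  · simp only [hD, htop D hD, true_and, not_true_eq_false, and_false, false_or]
    exact ⟨fun h => h.2, fun h => ⟨(mem_filter.1 hD).1, h⟩⟩
  · simp [hD]

lemma DoublyChordalBipartite.xval_eq (hS : DoublyChordalBipartite (qiGraph m n S))
    (u : Fin m × Fin n → ℝ) {T : Finset (Fin m × Fin n)} (hT : T ∈ colCliques S j₀)
    (htop : ∀ D ∈ colCliques S j₀, rowsOf D ⊆ rowsOf T) (i : Fin m) :
    xval S u (i, j₀) = colMarg S u j₀ *
      (∏ D ∈ maxCliques S \ colCliques S j₀, cliqueSum u D) * chainWeight S u j₀ T i := by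
  have hdisj : Disjoint (maxCliques S \ colCliques S j₀) (offChain S j₀ i T) :=
    disjoint_sdiff_self_left.mono_right (filter_subset _ _)
  rw [xval, hS.prod_maxIntsAt hT htop i u, maxCliques_sdiff_maxCliquesAt htop i,
    prod_union hdisj, chainWeight]
  ring

end ColumnForest

/-- for every column `j₀`,
`Σ_{i : (i,j₀) ∈ S} x_{i j₀} = u_{+j₀} · ∏_{D ∈ Max(S)} D⁺`. -/
theorem sum_entire_column (m n : ℕ) (S : Finset (Fin m × Fin n))
    (hS : DoublyChordalBipartite (qiGraph m n S)) (u : Fin m × Fin n → ℝ) (j₀ : Fin n) :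
    ∑ i ∈ Finset.univ.filter (fun i : Fin m => (i, j₀) ∈ S), xval S u (i, j₀) =
      colMarg S u j₀ * ∏ D ∈ maxCliques S, cliqueSum u D := by
  by_cases hcol : (univ.filter fun i : Fin m => (i, j₀) ∈ S).Nonempty
  · obtain ⟨T, hT, hrows⟩ := exists_mem_colCliques_rowsOf_eq hcol
    have htop : ∀ D ∈ colCliques S j₀, rowsOf D ⊆ rowsOf T :=
      fun D hD => hrows ▸ rowsOf_subset_of_mem_colCliques hD
    have hwithin : colCliquesWithin S j₀ T = colCliques S j₀ := filter_true_of_mem htop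
    rw [← hrows, sum_congr rfl fun i _ => hS.xval_eq u hT htop i, ← mul_sum,
      hS.sum_chainWeight u hT, hwithin, mul_assoc,
      prod_sdiff (show colCliques S j₀ ⊆ maxCliques S from filter_subset _ _)]
  · have hempty : S.filter (fun x => x.2 = j₀) = ∅ := filter_eq_empty_iff.2 fun x hx hxj =>
      hcol ⟨x.1, mem_filter.2 ⟨mem_univ _, hxj ▸ hx⟩⟩
    rw [not_nonempty_iff_eq_empty.1 hcol, sum_empty, colMarg, hempty, sum_empty, zero_mul]
end
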